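/- arXiv:2106.06556 — 10 statements merged into one kernel-verified Lean document; each statement's English description precedes it below -/
import Mathlib

section
/- If two words u and v over A have the same action on all columns (i.e., u ≡_styl v), then u and v have the same support (the same set of letters occurring in them). -/
/-- Schensted column insertion of a letter `x` into a column `γ` (a subset of the
alphabet `A`): if `x` is greater than every element of `γ`, then `x·γ = γ ∪ {x}`;
otherwise, `y` being the smallest element of `γ` with `y ≥ x`,
`x·γ = (γ \ {y}) ∪ {x}`. -/
def colInsert {A : Type*} [LinearOrder A] (x : A) (γ : Finset A) : Finset A :=
  if h : (γ.filter (fun y => x ≤ y)).Nonempty then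
    insert x (γ.erase ((γ.filter (fun y => x ≤ y)).min' h))
  else insert x γ

/-- The left action of a word `w ∈ A*` on a column: iterated Schensted column
insertion of the letters of `w`, rightmost letter first. -/
def colAct {A : Type*} [LinearOrder A] (w : List A) (γ : Finset A) : Finset A :=
  w.foldr colInsert γ

/-- The stylic congruence: two words are equivalent iff they have the same action
on every column. -/
def StylEq {A : Type*} [LinearOrder A] (u v : List A) : Prop :=
  ∀ γ : Finset A, colAct u γ = colAct v γ

lemma colInsert_key {A : Type*} [LinearOrder A] (x y : A) (γ : Finset A)
    (hsub : ∀ z, z < x → z ∈ γ) :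
    (∀ z, z < x → z ∈ colInsert y γ) ∧ (x ∈ colInsert y γ ↔ x ∈ γ ∨ y = x) := by
  unfold colInsert
  split_ifs with hne
  · set m := (γ.filter (fun z => y ≤ z)).min' hne with hm
    have hmmem : m ∈ γ.filter (fun z => y ≤ z) := Finset.min'_mem _ hne
    have hmγ : m ∈ γ := (Finset.mem_filter.mp hmmem).1
    have hym : y ≤ m := (Finset.mem_filter.mp hmmem).2
    constructor
    · intro z hz
      rcases eq_or_ne z y with rfl | hzy
      · exact Finset.mem_insert_self _ _
      · refine Finset.mem_insert_of_mem (Finset.mem_erase.mpr ⟨?_, hsub z hz⟩)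
        intro hzm
        rcases lt_or_ge y x with hyx | hxy
        · have hyf : y ∈ γ.filter (fun z => y ≤ z) :=
            Finset.mem_filter.mpr ⟨hsub y hyx, le_refl y⟩
          have : m ≤ y := Finset.min'_le _ _ hyf
          exact hzy (le_antisymm (hzm ▸ this) (hzm ▸ hym))
        · exact absurd (hzm ▸ hz) (not_lt.mpr (hxy.trans hym))
    · constructor
      · intro hx
        rcases Finset.mem_insert.mp hx with rfl | hx
        · exact Or.inr rfl
        · exact Or.inl (Finset.mem_of_mem_erase hx)
      · rintro (hx | rfl)
        · rcases eq_or_ne x y with rfl | hxy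
          · exact Finset.mem_insert_self _ _
          · refine Finset.mem_insert_of_mem (Finset.mem_erase.mpr ⟨?_, hx⟩)
            intro hxm
            rcases lt_or_ge y x with hyx | hxy2
            · have hyf : y ∈ γ.filter (fun z => y ≤ z) :=
                Finset.mem_filter.mpr ⟨hsub y hyx, le_refl y⟩
              have : m ≤ y := Finset.min'_le _ _ hyf
              exact absurd (hxm ▸ this) (not_le.mpr hyx)
            · exact hxy (le_antisymm hxy2 (hxm ▸ hym))
        · exact Finset.mem_insert_self _ _
  · constructor
    · intro z hz
      exact Finset.mem_insert_of_mem (hsub z hz)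
    · constructor
      · intro hx
        rcases Finset.mem_insert.mp hx with rfl | hx
        · exact Or.inr rfl
        · exact Or.inl hx
      · rintro (hx | rfl)
        · exact Finset.mem_insert_of_mem hx
        · exact Finset.mem_insert_self _ _

lemma colAct_key {A : Type*} [LinearOrder A] (x : A) (w : List A) (γ : Finset A)
    (hsub : ∀ z, z < x → z ∈ γ) :
    (∀ z, z < x → z ∈ colAct w γ) ∧ (x ∈ colAct w γ ↔ x ∈ γ ∨ x ∈ w) := by
  induction w with
  | nil => simpa [colAct] using hsub
  | cons y w ih =>
    have h1 := (colInsert_key x y (colAct w γ) ih.1)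
    refine ⟨h1.1, ?_⟩
    rw [show colAct (y :: w) γ = colInsert y (colAct w γ) from rfl, h1.2, ih.2]
    constructor
    · rintro ((hx | hx) | rfl)
      · exact Or.inl hx
      · exact Or.inr (List.mem_cons_of_mem _ hx)
      · exact Or.inr (List.mem_cons_self)
    · rintro (hx | hx)
      · exact Or.inl (Or.inl hx)
      · rcases List.mem_cons.mp hx with rfl | hx
        · exact Or.inr rfl
        · exact Or.inl (Or.inr hx)

/-- If two words have the same action on all columns, they have the same support. -/
theorem support_eq_of_stylEq {A : Type*} [LinearOrder A] [Fintype A]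
    (u v : List A) (h : StylEq u v) : u.toFinset = v.toFinset := by
  ext x
  classical
  set γ : Finset A := Finset.univ.filter (· < x) with hγ
  have hsub : ∀ z, z < x → z ∈ γ := fun z hz => by simp [hγ, hz]
  have hxγ : x ∉ γ := by simp [hγ]
  have hu := (colAct_key x u γ hsub).2
  have hv := (colAct_key x v γ hsub).2
  rw [h γ] at hu
  simp only [List.mem_toFinset]
  constructor
  · intro hx
    rcases hv.mp (hu.mpr (Or.inr hx)) with hx' | hx'
    · exact absurd hx' hxγ
    · exact hx'
  · intro hx
    rcases hu.mp (hv.mpr (Or.inr hx)) with hx' | hx'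
    · exact absurd hx' hxγ
    · exact hx'
end

section
/- The stylic monoid Styl(A) has a zero element: the image of the strictly decreasing word consisting of all letters of A satisfies zw = wz = z for every element w of Styl(A). -/
theorem colAct_append {A : Type*} [LinearOrder A] (u v : List A) (γ : Finset A) :
    colAct (u ++ v) γ = colAct u (colAct v γ) :=
  List.foldr_append

theorem colInsert_univ {A : Type*} [LinearOrder A] [Fintype A] (x : A) :
    colInsert x (Finset.univ : Finset A) = Finset.univ := by
  have hx : x ∈ (Finset.univ : Finset A).filter (fun y => x ≤ y) := by
    simp
  have h : ((Finset.univ : Finset A).filter (fun y => x ≤ y)).Nonempty := ⟨x, hx⟩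
  have hm : ((Finset.univ : Finset A).filter (fun y => x ≤ y)).min' h = x :=
    le_antisymm (Finset.min'_le _ _ hx)
      ((Finset.mem_filter.1 (Finset.min'_mem _ h)).2)
  rw [colInsert, dif_pos h, hm, Finset.insert_erase (Finset.mem_univ x)]

theorem colAct_univ {A : Type*} [LinearOrder A] [Fintype A] (w : List A) :
    colAct w (Finset.univ : Finset A) = Finset.univ := by
  induction w with
  | nil => rfl
  | cons x t ih => show colInsert x (colAct t _) = _; rw [ih, colInsert_univ]

theorem colInsert_superset {A : Type*} [LinearOrder A] {x : A} {γ : Finset A}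
    {s : Finset A} (hs : s ⊆ γ) (hlt : ∀ a ∈ s, a < x) :
    insert x s ⊆ colInsert x γ := by
  intro a ha
  rcases Finset.mem_insert.1 ha with rfl | ha
  · unfold colInsert; split <;> exact Finset.mem_insert_self _ _
  · have haγ : a ∈ γ := hs ha
    have halt : a < x := hlt a ha
    unfold colInsert
    split
    · next h =>
      refine Finset.mem_insert_of_mem (Finset.mem_erase.2 ⟨?_, haγ⟩)
      intro heq
      have : x ≤ a := heq ▸ (Finset.mem_filter.1 (Finset.min'_mem _ h)).2
      exact absurd this (not_le.2 halt)
    · exact Finset.mem_insert_of_mem haγ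

theorem colAct_superset {A : Type*} [LinearOrder A] {L : List A} {γ : Finset A}
    (hL : L.Pairwise (fun x y => y < x)) : L.toFinset ⊆ colAct L γ := by
  induction L with
  | nil => simp [colAct]
  | cons x t ih =>
    have ht := (List.pairwise_cons.1 hL).2
    have hx := (List.pairwise_cons.1 hL).1
    have hsub : t.toFinset ⊆ colAct t γ := ih ht
    have : insert x t.toFinset ⊆ colInsert x (colAct t γ) :=
      colInsert_superset hsub (fun a ha => hx a (List.mem_toFinset.1 ha))
    simpa [colAct] using this

/-- The stylic monoid has a zero: the image of the strictly decreasing word `z`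
consisting of all letters of `A` satisfies `z·w ≡ z` and `w·z ≡ z` for every
word `w` (products in the stylic monoid correspond to concatenation of words). -/
theorem styl_has_zero {A : Type*} [LinearOrder A] [Fintype A]
    (z : List A) (hz : z.Chain' (fun x y => y < x)) (hzall : z.toFinset = Finset.univ)
    (w : List A) : StylEq (z ++ w) z ∧ StylEq (w ++ z) z := by
  have key : ∀ γ, colAct z γ = Finset.univ := fun γ =>
    Finset.eq_univ_of_forall fun a => by
      have := colAct_superset (L := z) (γ := γ)
        ((List.isChain_iff_pairwise).1 hz)
      exact this (by rw [hzall]; exact Finset.mem_univ a)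
  constructor <;> intro γ
  · rw [colAct_append, key, key]
  · rw [colAct_append, key, colAct_univ]
end

section
/- Let a ∈ A and u ∈ A* a word all of whose letters are ≥ a. Then aua ≡_styl ua, i.e., the words aua and ua have the same action on every column by iterated column insertion. -/
lemma mem_colInsert_self {A : Type*} [LinearOrder A] (a : A) (γ : Finset A) :
    a ∈ colInsert a γ := by
  unfold colInsert; split <;> exact Finset.mem_insert_self _ _

lemma mem_colInsert_of {A : Type*} [LinearOrder A] {a b : A} {γ : Finset A}
    (h : a ∈ γ) (hab : a ≤ b) : a ∈ colInsert b γ := by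
  unfold colInsert
  split
  · rename_i hne
    rcases eq_or_ne a b with rfl | hne'
    · exact Finset.mem_insert_self _ _
    set m := (γ.filter (fun y => b ≤ y)).min' hne with hm
    have hbm : b ≤ m := (Finset.mem_filter.1 ((γ.filter (fun y => b ≤ y)).min'_mem hne)).2
    have ham : a ≠ m := fun h' => hne' (le_antisymm hab (h' ▸ hbm))
    exact Finset.mem_insert_of_mem (Finset.mem_erase.2 ⟨ham, h⟩)
  · exact Finset.mem_insert_of_mem h

lemma colInsert_of_mem {A : Type*} [LinearOrder A] {a : A} {γ : Finset A}
    (h : a ∈ γ) : colInsert a γ = γ := by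
  have haf : a ∈ γ.filter (fun y => a ≤ y) := Finset.mem_filter.2 ⟨h, le_refl a⟩
  have hne : (γ.filter (fun y => a ≤ y)).Nonempty := ⟨a, haf⟩
  have hmin : (γ.filter (fun y => a ≤ y)).min' hne = a :=
    le_antisymm (Finset.min'_le _ _ haf)
      (Finset.le_min' _ _ _ fun y hy => (Finset.mem_filter.1 hy).2)
  rw [colInsert, dif_pos hne, hmin, Finset.insert_erase h]

lemma mem_colAct {A : Type*} [LinearOrder A] {a : A} {u : List A} {γ : Finset A}
    (h : a ∈ γ) (hu : ∀ b ∈ u, a ≤ b) : a ∈ colAct u γ := by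
  induction u with
  | nil => exact h
  | cons b t ih =>
      exact mem_colInsert_of (ih fun c hc => hu c (List.mem_cons_of_mem _ hc))
        (hu b List.mem_cons_self)

/-- If every letter of `u` is `≥ a`, then `aua ≡_styl ua`. -/
theorem styl_aua {A : Type*} [LinearOrder A] [Fintype A]
    (a : A) (u : List A) (hu : ∀ b ∈ u, a ≤ b) :
    StylEq (a :: (u ++ [a])) (u ++ [a]) := by
  intro γ
  have h1 : colAct (u ++ [a]) γ = colAct u (colInsert a γ) := by
    simp [colAct, List.foldr_append]
  have h2 : a ∈ colAct u (colInsert a γ) :=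
    mem_colAct (mem_colInsert_self a γ) hu
  show colInsert a (colAct (u ++ [a]) γ) = colAct (u ++ [a]) γ
  rw [h1]
  exact colInsert_of_mem h2
end

section
/- The action of a letter on columns is monotone: for any letter x and columns γ₁ ≤ γ₂ (in the column order), x·γ₁ ≤ x·γ₂. -/
/-- The order on columns: `γ₁ ≤ γ₂` iff there is a regressive injection from
`γ₂` into `γ₁` (so in particular every column is `≤` the empty column). -/
def ColLe {A : Type*} [LinearOrder A] (γ₁ γ₂ : Finset A) : Prop :=
  ∃ f : A → A, Set.InjOn f ↑γ₂ ∧ ∀ x ∈ γ₂, f x ∈ γ₁ ∧ f x ≤ x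

/-- The action of a letter on columns is monotone for the column order. -/
theorem colInsert_mono {A : Type*} [LinearOrder A] [Fintype A] (x : A)
    (γ₁ γ₂ : Finset A) (h : ColLe γ₁ γ₂) :
    ColLe (colInsert x γ₁) (colInsert x γ₂) := by
  obtain ⟨f, hinj, hf⟩ := h
  unfold colInsert
  by_cases h₂ : (γ₂.filter (fun y => x ≤ y)).Nonempty
  · set m₂ := (γ₂.filter (fun y => x ≤ y)).min' h₂ with hm₂def
    have hm₂ : m₂ ∈ γ₂ ∧ x ≤ m₂ := Finset.mem_filter.mp (Finset.min'_mem _ h₂)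
    have hmin₂ : ∀ y ∈ γ₂, x ≤ y → m₂ ≤ y := fun y hy hxy =>
      Finset.min'_le _ y (Finset.mem_filter.mpr ⟨hy, hxy⟩)
    have hne₂ : ∀ a ∈ γ₂, a ≠ m₂ → a ≠ x := by
      intro a ha ham hax
      apply ham
      rw [hax]
      exact le_antisymm hm₂.2 (hmin₂ x (hax ▸ ha) le_rfl)
    by_cases h₁ : (γ₁.filter (fun y => x ≤ y)).Nonempty
    · set m₁ := (γ₁.filter (fun y => x ≤ y)).min' h₁ with hm₁def
      have hm₁ : m₁ ∈ γ₁ ∧ x ≤ m₁ := Finset.mem_filter.mp (Finset.min'_mem _ h₁)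
      have hmin₁ : ∀ y ∈ γ₁, x ≤ y → m₁ ≤ y := fun y hy hxy =>
        Finset.min'_le _ y (Finset.mem_filter.mpr ⟨hy, hxy⟩)
      have hx₁ : x ∈ γ₁ → m₁ = x := fun hx =>
        le_antisymm (hmin₁ x hx le_rfl) hm₁.2
      rw [dif_pos h₂, dif_pos h₁]
      refine ⟨fun y => if y = x then x else if f y = m₁ then f m₂ else f y, ?_, ?_⟩
      · intro a ha b hb hab
        simp only [Finset.coe_insert, Set.mem_insert_iff, Finset.mem_coe,
          Finset.mem_erase] at ha hb
        dsimp only at hab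
        rcases ha with ha | ⟨ham, haγ⟩ <;> rcases hb with hb | ⟨hbm, hbγ⟩
        · exact ha.trans hb.symm
        · exfalso
          have hbx : b ≠ x := hne₂ b hbγ hbm
          rw [if_pos ha, if_neg hbx] at hab
          by_cases hfb : f b = m₁
          · rw [if_pos hfb] at hab
            have hxγ₁ : x ∈ γ₁ := hab ▸ (hf m₂ hm₂.1).1
            have hm1x : m₁ = x := hx₁ hxγ₁
            exact hbm (hinj hbγ hm₂.1 (hfb.trans (hm1x.trans hab)))
          · rw [if_neg hfb] at hab
            have hxγ₁ : x ∈ γ₁ := hab ▸ (hf b hbγ).1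
            exact hfb (hab.symm.trans (hx₁ hxγ₁).symm)
        · exfalso
          have hax : a ≠ x := hne₂ a haγ ham
          rw [if_pos hb, if_neg hax] at hab
          by_cases hfa : f a = m₁
          · rw [if_pos hfa] at hab
            have hxγ₁ : x ∈ γ₁ := hab ▸ (hf m₂ hm₂.1).1
            have hm1x : m₁ = x := hx₁ hxγ₁
            exact ham (hinj haγ hm₂.1 (hfa.trans (hm1x.trans hab.symm)))
          · rw [if_neg hfa] at hab
            have hxγ₁ : x ∈ γ₁ := hab.symm ▸ (hf a haγ).1
            exact hfa (hab.trans (hx₁ hxγ₁).symm)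
        · have hax : a ≠ x := hne₂ a haγ ham
          have hbx : b ≠ x := hne₂ b hbγ hbm
          rw [if_neg hax, if_neg hbx] at hab
          by_cases hfa : f a = m₁ <;> by_cases hfb : f b = m₁
          · exact hinj haγ hbγ (hfa.trans hfb.symm)
          · rw [if_pos hfa, if_neg hfb] at hab
            exact absurd (hinj hm₂.1 hbγ hab).symm hbm
          · rw [if_neg hfa, if_pos hfb] at hab
            exact absurd (hinj haγ hm₂.1 hab) ham
          · rw [if_neg hfa, if_neg hfb] at hab
            exact hinj haγ hbγ hab
      · intro y hy
        dsimp only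
        rcases Finset.mem_insert.mp hy with rfl | hy'
        · rw [if_pos rfl]
          exact ⟨Finset.mem_insert_self _ _, le_rfl⟩
        · obtain ⟨hym, hyγ⟩ := Finset.mem_erase.mp hy'
          have hyx : y ≠ x := hne₂ y hyγ hym
          rw [if_neg hyx]
          by_cases hfy : f y = m₁
          · rw [if_pos hfy]
            have hfm₂ : f m₂ ≠ m₁ := fun hc =>
              hym (hinj hyγ hm₂.1 (hfy.trans hc.symm))
            have hxy : x ≤ y := le_trans hm₁.2 (hfy ▸ (hf y hyγ).2)
            refine ⟨Finset.mem_insert_of_mem (Finset.mem_erase.mpr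
              ⟨hfm₂, (hf m₂ hm₂.1).1⟩), ?_⟩
            exact le_trans (hf m₂ hm₂.1).2 (hmin₂ y hyγ hxy)
          · rw [if_neg hfy]
            exact ⟨Finset.mem_insert_of_mem (Finset.mem_erase.mpr
              ⟨hfy, (hf y hyγ).1⟩), (hf y hyγ).2⟩
    · rw [dif_pos h₂, dif_neg h₁]
      have hlt : ∀ z ∈ γ₁, ¬ x ≤ z := by
        intro z hz hxz
        exact h₁ ⟨z, Finset.mem_filter.mpr ⟨hz, hxz⟩⟩
      refine ⟨fun y => if y = x then x else f y, ?_, ?_⟩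
      · intro a ha b hb hab
        simp only [Finset.coe_insert, Set.mem_insert_iff, Finset.mem_coe,
          Finset.mem_erase] at ha hb
        dsimp only at hab
        rcases ha with ha | ⟨ham, haγ⟩ <;> rcases hb with hb | ⟨hbm, hbγ⟩
        · exact ha.trans hb.symm
        · exfalso
          have hbx : b ≠ x := hne₂ b hbγ hbm
          rw [if_pos ha, if_neg hbx] at hab
          exact hlt _ (hab ▸ (hf b hbγ).1) le_rfl
        · exfalso
          have hax : a ≠ x := hne₂ a haγ ham
          rw [if_pos hb, if_neg hax] at hab
          exact hlt _ (hab.symm ▸ (hf a haγ).1) le_rfl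
        · have hax : a ≠ x := hne₂ a haγ ham
          have hbx : b ≠ x := hne₂ b hbγ hbm
          rw [if_neg hax, if_neg hbx] at hab
          exact hinj haγ hbγ hab
      · intro y hy
        dsimp only
        rcases Finset.mem_insert.mp hy with rfl | hy'
        · rw [if_pos rfl]
          exact ⟨Finset.mem_insert_self _ _, le_rfl⟩
        · obtain ⟨hym, hyγ⟩ := Finset.mem_erase.mp hy'
          have hyx : y ≠ x := hne₂ y hyγ hym
          rw [if_neg hyx]
          exact ⟨Finset.mem_insert_of_mem (hf y hyγ).1, (hf y hyγ).2⟩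
  · rw [dif_neg h₂]
    have hlt₂ : ∀ z ∈ γ₂, ¬ x ≤ z := by
      intro z hz hxz
      exact h₂ ⟨z, Finset.mem_filter.mpr ⟨hz, hxz⟩⟩
    have hxγ₂ : x ∉ γ₂ := fun hc => hlt₂ x hc le_rfl
    refine ⟨fun y => if y = x then x else f y, ?_, ?_⟩
    · intro a ha b hb hab
      simp only [Finset.coe_insert, Set.mem_insert_iff, Finset.mem_coe] at ha hb
      dsimp only at hab
      rcases ha with ha | haγ <;> rcases hb with hb | hbγ
      · exact ha.trans hb.symm
      · exfalso
        have hbx : b ≠ x := fun hc => hxγ₂ (hc ▸ hbγ)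
        rw [if_pos ha, if_neg hbx] at hab
        have hlt : f b < x := lt_of_le_of_lt (hf b hbγ).2 (lt_of_not_ge (hlt₂ b hbγ))
        exact absurd hab.symm (ne_of_lt hlt)
      · exfalso
        have hax : a ≠ x := fun hc => hxγ₂ (hc ▸ haγ)
        rw [if_pos hb, if_neg hax] at hab
        have hlt : f a < x := lt_of_le_of_lt (hf a haγ).2 (lt_of_not_ge (hlt₂ a haγ))
        exact absurd hab (ne_of_lt hlt)
      · have hax : a ≠ x := fun hc => hxγ₂ (hc ▸ haγ)
        have hbx : b ≠ x := fun hc => hxγ₂ (hc ▸ hbγ)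
        rw [if_neg hax, if_neg hbx] at hab
        exact hinj haγ hbγ hab
    · intro y hy
      dsimp only
      rcases Finset.mem_insert.mp hy with rfl | hyγ
      · rw [if_pos rfl]
        split_ifs with h₁
        · exact ⟨Finset.mem_insert_self _ _, le_rfl⟩
        · exact ⟨Finset.mem_insert_self _ _, le_rfl⟩
      · have hyx : y ≠ x := fun hc => hxγ₂ (hc ▸ hyγ)
        rw [if_neg hyx]
        have hfylt : f y < x := lt_of_le_of_lt (hf y hyγ).2 (lt_of_not_ge (hlt₂ y hyγ))
        refine ⟨?_, (hf y hyγ).2⟩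
        split_ifs with h₁
        · refine Finset.mem_insert_of_mem (Finset.mem_erase.mpr ⟨?_, (hf y hyγ).1⟩)
          have hm₁ : x ≤ (γ₁.filter (fun y => x ≤ y)).min' h₁ :=
            (Finset.mem_filter.mp (Finset.min'_mem _ h₁)).2
          exact ne_of_lt (lt_of_lt_of_le hfylt hm₁)
        · exact Finset.mem_insert_of_mem (hf y hyγ).1
end

section
/- A column γ is fixed by the action of a word w (i.e., w·γ = γ) if and only if Supp(w) ⊆ γ. In particular, the support of w is the smallest fixpoint (under inclusion) of the action of w on columns. -/
section Aux
set_option linter.unusedSectionVars false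

variable {A : Type*} [LinearOrder A]

lemma colInsert_of_mem_s14 {x : A} {γ : Finset A} (hx : x ∈ γ) : colInsert x γ = γ := by
  have hne : (γ.filter (fun y => x ≤ y)).Nonempty :=
    ⟨x, Finset.mem_filter.2 ⟨hx, le_refl x⟩⟩
  have hmin : (γ.filter (fun y => x ≤ y)).min' hne = x := by
    apply le_antisymm
    · exact Finset.min'_le _ x (Finset.mem_filter.2 ⟨hx, le_refl x⟩)
    · exact Finset.le_min' _ _ _ (fun y hy => (Finset.mem_filter.1 hy).2)
  rw [colInsert, dif_pos hne, hmin, Finset.insert_erase hx]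

variable [Fintype A]

/-- rank of a letter -/
noncomputable def rk (y : A) : ℤ := ((Finset.univ.filter (fun b => b ≤ y)).card : ℤ)

lemma rk_pos (y : A) : 1 ≤ rk y := by
  have : (Finset.univ.filter (fun b => b ≤ y)).Nonempty :=
    ⟨y, Finset.mem_filter.2 ⟨Finset.mem_univ y, le_refl y⟩⟩
  have := Finset.card_pos.2 this
  unfold rk; exact_mod_cast this

lemma rk_le (y : A) : rk y ≤ (Fintype.card A : ℤ) := by
  unfold rk
  exact_mod_cast Finset.card_le_card (Finset.filter_subset _ _)

lemma rk_lt_rk {x m : A} (h : x < m) : rk x < rk m := by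
  unfold rk
  have hss : (Finset.univ.filter (fun b => b ≤ x)) ⊂ (Finset.univ.filter (fun b => b ≤ m)) := by
    constructor
    · intro b hb
      rcases Finset.mem_filter.1 hb with ⟨_, hb2⟩
      exact Finset.mem_filter.2 ⟨Finset.mem_univ b, hb2.trans h.le⟩
    · intro hsub
      have := hsub (Finset.mem_filter.2 ⟨Finset.mem_univ m, le_refl m⟩)
      exact absurd (Finset.mem_filter.1 this).2 (not_le.2 h)
  exact_mod_cast Finset.card_lt_card hss

/-- potential function -/
noncomputable def mu (γ : Finset A) : ℤ :=
  ((Fintype.card A : ℤ) ^ 2 + 1) * γ.card - ∑ y ∈ γ, rk y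

lemma mu_colInsert_lt {x : A} {γ : Finset A} (hx : x ∉ γ) : mu γ < mu (colInsert x γ) := by
  by_cases hne : (γ.filter (fun y => x ≤ y)).Nonempty
  · set m := (γ.filter (fun y => x ≤ y)).min' hne with hm
    have hmmem : m ∈ γ.filter (fun y => x ≤ y) := Finset.min'_mem _ _
    have hmγ : m ∈ γ := (Finset.mem_filter.1 hmmem).1
    have hxm : x < m := lt_of_le_of_ne (Finset.mem_filter.1 hmmem).2
      (fun h => hx (h ▸ hmγ))
    have hxe : x ∉ γ.erase m := fun h => hx (Finset.mem_of_mem_erase h)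
    rw [colInsert, dif_pos hne, ← hm, mu, mu]
    rw [Finset.card_insert_of_notMem hxe, Finset.sum_insert hxe]
    have hcard : (γ.erase m).card + 1 = γ.card := Finset.card_erase_add_one hmγ
    have hsum : (∑ y ∈ γ.erase m, rk y) + rk m = ∑ y ∈ γ, rk y :=
      Finset.sum_erase_add γ rk hmγ
    have h1 : ((γ.erase m).card + 1 : ℤ) = γ.card := by exact_mod_cast hcard
    have h2 := rk_lt_rk hxm
    push_cast
    rw [h1]
    linarith [hsum]
  · rw [colInsert, dif_neg hne, mu, mu, Finset.card_insert_of_notMem hx,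
      Finset.sum_insert hx]
    have h1 := rk_le x
    have h2 : (0:ℤ) ≤ (Fintype.card A : ℤ) := by positivity
    push_cast
    nlinarith

lemma mu_le_mu_colInsert (x : A) (γ : Finset A) : mu γ ≤ mu (colInsert x γ) := by
  by_cases hx : x ∈ γ
  · rw [colInsert_of_mem_s14 hx]
  · exact (mu_colInsert_lt hx).le

lemma mu_le_mu_colAct (w : List A) (γ : Finset A) : mu γ ≤ mu (colAct w γ) := by
  induction w with
  | nil => exact le_refl _
  | cons x w ih =>
    exact ih.trans (mu_le_mu_colInsert x (colAct w γ))

lemma colAct_eq_of_subset {w : List A} {γ : Finset A} (h : w.toFinset ⊆ γ) :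
    colAct w γ = γ := by
  induction w with
  | nil => rfl
  | cons x w ih =>
    have hx : x ∈ γ := h (by simp)
    have hw : w.toFinset ⊆ γ := fun y hy => h (by simp [List.mem_toFinset.1 hy])
    show colInsert x (colAct w γ) = γ
    rw [ih hw, colInsert_of_mem_s14 hx]

lemma subset_of_colAct_eq {w : List A} {γ : Finset A} (h : colAct w γ = γ) :
    w.toFinset ⊆ γ := by
  induction w with
  | nil => simp
  | cons x w ih =>
    have hstep : colInsert x (colAct w γ) = γ := h
    have hxmem : x ∈ colAct w γ := by
      by_contra hx
      have h1 := mu_colInsert_lt hx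
      have h2 := mu_le_mu_colAct w γ
      rw [hstep] at h1
      exact absurd (h1.trans_le h2) (lt_irrefl _)
    have hfix : colAct w γ = γ := by
      rw [colInsert_of_mem_s14 hxmem] at hstep; exact hstep
    intro y hy
    rcases List.mem_cons.1 (List.mem_toFinset.1 hy) with hy' | hy'
    · exact hy' ▸ hfix ▸ hxmem
    · exact ih hfix (List.mem_toFinset.2 hy')

end Aux

/-- A column `γ` is fixed by a word `w` iff `Supp(w) ⊆ γ`; in particular the
support of `w` is the smallest fixpoint (under inclusion) of the action of `w`. -/
theorem colAct_fixed_iff {A : Type*} [LinearOrder A] [Fintype A] (w : List A) :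
    (∀ γ : Finset A, colAct w γ = γ ↔ w.toFinset ⊆ γ) ∧
      IsLeast {γ : Finset A | colAct w γ = γ} w.toFinset := by
  refine ⟨fun γ => ⟨subset_of_colAct_eq, colAct_eq_of_subset⟩, ?_, ?_⟩
  · exact colAct_eq_of_subset (le_refl _)
  · intro γ hγ
    exact subset_of_colAct_eq hγ
end

section
/- If w is a strictly decreasing word over A and γ any column, then Supp(w) ⊆ w·γ, and consequently the function γ ↦ w·γ is an idempotent endofunction on the set of columns. -/
/-- If `w` is a strictly decreasing word then `Supp(w) ⊆ w·γ` for every column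
`γ`, and consequently `γ ↦ w·γ` is an idempotent endofunction on columns. -/
theorem colAct_decreasing_idem {A : Type*} [LinearOrder A] [Fintype A]
    (w : List A) (hw : w.Chain' (fun x y => y < x)) :
    (∀ γ : Finset A, w.toFinset ⊆ colAct w γ) ∧
      (∀ γ : Finset A, colAct w (colAct w γ) = colAct w γ) := by
  have hmem : ∀ (x : A) (γ : Finset A), x ∈ colInsert x γ := by
    intro x γ
    unfold colInsert
    split <;> exact Finset.mem_insert_self _ _
  have hlt : ∀ (x y : A) (γ : Finset A), y ∈ γ → y < x → y ∈ colInsert x γ := by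
    intro x y γ hy hyx
    unfold colInsert
    split
    next h =>
      refine Finset.mem_insert_of_mem (Finset.mem_erase.2 ⟨?_, hy⟩)
      intro hEq
      have := (γ.filter (fun z => x ≤ z)).min'_mem h
      rw [← hEq] at this
      exact absurd (Finset.mem_filter.1 this).2 (not_le.2 hyx)
    next h => exact Finset.mem_insert_of_mem hy
  have hfix : ∀ (x : A) (γ : Finset A), x ∈ γ → colInsert x γ = γ := by
    intro x γ hx
    have hxf : x ∈ γ.filter (fun y => x ≤ y) := Finset.mem_filter.2 ⟨hx, le_refl x⟩
    have hne : (γ.filter (fun y => x ≤ y)).Nonempty := ⟨x, hxf⟩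
    have hmin : (γ.filter (fun y => x ≤ y)).min' hne = x := by
      apply le_antisymm (Finset.min'_le _ _ hxf)
      exact (Finset.mem_filter.1 ((γ.filter (fun y => x ≤ y)).min'_mem hne)).2
    unfold colInsert
    rw [dif_pos hne, hmin, Finset.insert_erase hx]
  have hsubgen : ∀ u : List A, u.Pairwise (fun x y => y < x) →
      ∀ γ : Finset A, u.toFinset ⊆ colAct u γ := by
    intro u
    induction u with
    | nil => intro _ γ; simp
    | cons a rest ih =>
      intro hpw γ y hy
      simp only [List.toFinset_cons, Finset.mem_insert] at hy
      rcases hy with rfl | hy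
      · exact hmem y _
      · have hya : y < a := (List.pairwise_cons.1 hpw).1 y (List.mem_toFinset.1 hy)
        exact hlt a y _ (ih (List.pairwise_cons.1 hpw).2 γ hy) hya
  have hsub := hsubgen w ((List.isChain_iff_pairwise).1 hw)
  refine ⟨hsub, fun γ => ?_⟩
  have key : ∀ (u : List A) (δ : Finset A), u.toFinset ⊆ δ → colAct u δ = δ := by
    intro u
    induction u with
    | nil => intros; rfl
    | cons a rest ih =>
      intro δ hδ
      have ha : a ∈ δ := hδ (by simp)
      have hr : rest.toFinset ⊆ δ := fun y hy => hδ (by simp [List.mem_toFinset.1 hy])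
      show colInsert a (colAct rest δ) = δ
      rw [ih δ hr, hfix a δ ha]
  exact key w _ (hsub γ)
end

section
/- The idempotent elements of the stylic monoid Styl(A) are exactly the images of strictly decreasing words, and there are exactly 2^{|A|} idempotents in Styl(A). -/
/-- The action of a word as an endofunction of the set of columns. -/
def colActEnd {A : Type*} [LinearOrder A] (w : List A) : Function.End (Finset A) :=
  fun γ => colAct w γ

namespace StylAux

variable {A : Type*} [LinearOrder A]

lemma colAct_nil (γ : Finset A) : colAct [] γ = γ := rfl

lemma colAct_cons (y : A) (w : List A) (γ : Finset A) :
    colAct (y :: w) γ = colInsert y (colAct w γ) := rfl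

lemma colInsert_bump (y : A) (γ : Finset A) (h : (γ.filter (fun z => y ≤ z)).Nonempty) :
    colInsert y γ = insert y (γ.erase ((γ.filter (fun z => y ≤ z)).min' h)) := by
  rw [colInsert, dif_pos h]

lemma colInsert_nobump (y : A) (γ : Finset A) (h : ¬ (γ.filter (fun z => y ≤ z)).Nonempty) :
    colInsert y γ = insert y γ := by
  rw [colInsert, dif_neg h]

lemma min'_spec_mem (y : A) (γ : Finset A) (h : (γ.filter (fun z => y ≤ z)).Nonempty) :
    (γ.filter (fun z => y ≤ z)).min' h ∈ γ ∧ y ≤ (γ.filter (fun z => y ≤ z)).min' h := by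
  have := (γ.filter (fun z => y ≤ z)).min'_mem h
  simpa using (Finset.mem_filter.mp this)

lemma self_mem_colInsert (y : A) (γ : Finset A) : y ∈ colInsert y γ := by
  by_cases h : (γ.filter (fun z => y ≤ z)).Nonempty
  · rw [colInsert_bump y γ h]; exact Finset.mem_insert_self _ _
  · rw [colInsert_nobump y γ h]; exact Finset.mem_insert_self _ _

lemma mem_colInsert_of_lt {z y : A} {γ : Finset A} (hz : z ∈ γ) (hlt : z < y) :
    z ∈ colInsert y γ := by
  by_cases h : (γ.filter (fun z => y ≤ z)).Nonempty
  · rw [colInsert_bump y γ h]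
    refine Finset.mem_insert_of_mem (Finset.mem_erase.mpr ⟨?_, hz⟩)
    have := (min'_spec_mem y γ h).2
    exact fun he => absurd (he ▸ this) (not_le.mpr hlt)
  · rw [colInsert_nobump y γ h]; exact Finset.mem_insert_of_mem hz

lemma colInsert_subset_insert (y : A) (γ : Finset A) : colInsert y γ ⊆ insert y γ := by
  by_cases h : (γ.filter (fun z => y ≤ z)).Nonempty
  · rw [colInsert_bump y γ h]
    exact Finset.insert_subset_insert _ (Finset.erase_subset _ _)
  · rw [colInsert_nobump y γ h]

lemma colInsert_eq_self {y : A} {γ : Finset A} (hy : y ∈ γ) : colInsert y γ = γ := by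
  have h : (γ.filter (fun z => y ≤ z)).Nonempty := ⟨y, Finset.mem_filter.mpr ⟨hy, le_rfl⟩⟩
  have hm : (γ.filter (fun z => y ≤ z)).min' h = y := by
    refine le_antisymm (Finset.min'_le _ _ (Finset.mem_filter.mpr ⟨hy, le_rfl⟩)) ?_
    exact (min'_spec_mem y γ h).2
  rw [colInsert_bump y γ h, hm, Finset.insert_erase hy]

lemma colInsert_mono {γ δ : Finset A} (y : A) (hsub : γ ⊆ δ) :
    colInsert y γ ⊆ colInsert y δ := by
  by_cases hγ : (γ.filter (fun z => y ≤ z)).Nonempty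
  · have hδ : (δ.filter (fun z => y ≤ z)).Nonempty := by
      obtain ⟨t, ht⟩ := hγ
      exact ⟨t, Finset.mem_filter.mpr ⟨hsub (Finset.mem_filter.mp ht).1,
        (Finset.mem_filter.mp ht).2⟩⟩
    set mγ := (γ.filter (fun z => y ≤ z)).min' hγ with hmγ
    set mδ := (δ.filter (fun z => y ≤ z)).min' hδ with hmδ
    rw [colInsert_bump y γ hγ, colInsert_bump y δ hδ]
    intro z hz
    rcases Finset.mem_insert.mp hz with rfl | hz
    · exact Finset.mem_insert_self _ _
    · obtain ⟨hzm, hzγ⟩ := Finset.mem_erase.mp hz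
      refine Finset.mem_insert_of_mem (Finset.mem_erase.mpr ⟨?_, hsub hzγ⟩)
      by_cases hyz : y ≤ z
      · have h1 : mγ ≤ z := Finset.min'_le _ _ (Finset.mem_filter.mpr ⟨hzγ, hyz⟩)
        have h2 : mδ ≤ mγ := Finset.min'_le _ _ (Finset.mem_filter.mpr
          ⟨hsub (min'_spec_mem y γ hγ).1, (min'_spec_mem y γ hγ).2⟩)
        exact ne_of_gt (lt_of_le_of_lt h2 (lt_of_le_of_ne h1 (Ne.symm hzm)))
      · have : y ≤ mδ := (min'_spec_mem y δ hδ).2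
        exact fun he => hyz (he ▸ this)
  · by_cases hδ : (δ.filter (fun z => y ≤ z)).Nonempty
    · rw [colInsert_nobump y γ hγ, colInsert_bump y δ hδ]
      intro z hz
      rcases Finset.mem_insert.mp hz with rfl | hz
      · exact Finset.mem_insert_self _ _
      · have hzy : ¬ y ≤ z := by
          intro hyz
          exact hγ ⟨z, Finset.mem_filter.mpr ⟨hz, hyz⟩⟩
        refine Finset.mem_insert_of_mem (Finset.mem_erase.mpr ⟨?_, hsub hz⟩)
        have : y ≤ (δ.filter (fun z => y ≤ z)).min' hδ := (min'_spec_mem y δ hδ).2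
        exact fun he => hzy (he ▸ this)
    · rw [colInsert_nobump y γ hγ, colInsert_nobump y δ hδ]
      exact Finset.insert_subset_insert _ hsub

lemma colAct_mono {γ δ : Finset A} (w : List A) (hsub : γ ⊆ δ) :
    colAct w γ ⊆ colAct w δ := by
  induction w with
  | nil => exact hsub
  | cons y w ih => exact colInsert_mono y ih

lemma mem_colAct_of_pairwise {w : List A} (hw : w.Pairwise (· > ·)) {z : A} (hz : z ∈ w)
    (γ : Finset A) : z ∈ colAct w γ := by
  induction w with
  | nil => simp at hz
  | cons y w ih =>
    rw [colAct_cons]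
    rcases List.mem_cons.mp hz with rfl | hz
    · exact self_mem_colInsert _ _
    · exact mem_colInsert_of_lt (ih (List.pairwise_cons.mp hw).2 hz)
        ((List.pairwise_cons.mp hw).1 z hz)

lemma colAct_eq_self {w : List A} {δ : Finset A} (hw : ∀ z ∈ w, z ∈ δ) :
    colAct w δ = δ := by
  induction w with
  | nil => rfl
  | cons y w ih =>
    rw [colAct_cons, ih (fun z hz => hw z (List.mem_cons_of_mem _ hz))]
    exact colInsert_eq_self (hw y List.mem_cons_self)

lemma colAct_subset (w : List A) (γ : Finset A) :
    colAct w γ ⊆ γ ∪ w.toFinset := by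
  induction w with
  | nil => simp [colAct_nil]
  | cons y w ih =>
    rw [colAct_cons]
    refine (colInsert_subset_insert _ _).trans ?_
    intro z hz
    rcases Finset.mem_insert.mp hz with rfl | hz
    · simp
    · rcases Finset.mem_union.mp (ih hz) with h | h
      · exact Finset.mem_union_left _ h
      · simp only [Finset.mem_union, List.mem_toFinset] at h ⊢
        exact Or.inr (List.mem_cons_of_mem _ h)

def nu (x : WithTop A) (γ : Finset A) : ℕ :=
  (γ.filter (fun z : A => (z : WithTop A) < x)).card

lemma nu_mono_set {γ δ : Finset A} (x : WithTop A) (h : γ ⊆ δ) : nu x γ ≤ nu x δ :=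
  Finset.card_le_card (Finset.filter_subset_filter _ h)

example (γ : Finset A) : nu ⊤ γ = γ.card := by
  simp [nu, WithTop.coe_lt_top]

lemma nu_colInsert_of_le {x : WithTop A} {y : A} (γ : Finset A) (hxy : x ≤ (y : WithTop A)) :
    nu x (colInsert y γ) = nu x γ := by
  unfold nu
  congr 1
  ext z
  simp only [Finset.mem_filter]
  constructor
  · rintro ⟨hz, hpz⟩
    have hzy' : z < y := WithTop.coe_lt_coe.mp (lt_of_lt_of_le hpz hxy)
    refine ⟨?_, hpz⟩
    rcases Finset.mem_insert.mp (colInsert_subset_insert y γ hz) with rfl | h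
    · exact absurd hzy' (lt_irrefl _)
    · exact h
  · rintro ⟨hz, hpz⟩
    have hzy' : z < y := WithTop.coe_lt_coe.mp (lt_of_lt_of_le hpz hxy)
    exact ⟨mem_colInsert_of_lt hz hzy', hpz⟩

lemma nu_colInsert_lower {x : WithTop A} {y : A} (γ : Finset A) (hyx : (y : WithTop A) < x) :
    nu (y : A) γ + 1 ≤ nu x (colInsert y γ) := by
  have hsub : insert y (γ.filter (fun z : A => (z:WithTop A) < (y:WithTop A)))
      ⊆ (colInsert y γ).filter (fun z : A => (z:WithTop A) < x) := by
    intro z hz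
    rcases Finset.mem_insert.mp hz with rfl | hz
    · exact Finset.mem_filter.mpr ⟨self_mem_colInsert _ _, hyx⟩
    · obtain ⟨hzγ, hzy⟩ := Finset.mem_filter.mp hz
      exact Finset.mem_filter.mpr ⟨mem_colInsert_of_lt hzγ (WithTop.coe_lt_coe.mp hzy),
        lt_trans hzy hyx⟩
  have hy : y ∉ γ.filter (fun z : A => (z:WithTop A) < (y:WithTop A)) := by simp
  calc nu (y : WithTop A) γ + 1
      = (insert y (γ.filter (fun z : A => (z:WithTop A) < (y:WithTop A)))).card :=
        (Finset.card_insert_of_notMem hy).symm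
    _ ≤ _ := Finset.card_le_card hsub

lemma nu_colInsert_mono (x : WithTop A) (y : A) (γ : Finset A) :
    nu x γ ≤ nu x (colInsert y γ) := by
  by_cases h : (γ.filter (fun z => y ≤ z)).Nonempty
  · set m := (γ.filter (fun z => y ≤ z)).min' h with hm
    obtain ⟨hmγ, hym⟩ := min'_spec_mem y γ h
    by_cases hpm : (m : WithTop A) < x
    · have hyx : (y : WithTop A) < x := lt_of_le_of_lt (WithTop.coe_le_coe.mpr hym) hpm
      have hsub : insert y ((γ.filter (fun z : A => (z:WithTop A) < x)).erase m)
          ⊆ (colInsert y γ).filter (fun z : A => (z:WithTop A) < x) := by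
        intro z hz
        rcases Finset.mem_insert.mp hz with rfl | hz
        · exact Finset.mem_filter.mpr ⟨self_mem_colInsert _ _, hyx⟩
        · obtain ⟨hzm, hz'⟩ := Finset.mem_erase.mp hz
          obtain ⟨hzγ, hpz⟩ := Finset.mem_filter.mp hz'
          refine Finset.mem_filter.mpr ⟨?_, hpz⟩
          rw [colInsert_bump y γ h]
          exact Finset.mem_insert_of_mem (Finset.mem_erase.mpr ⟨hzm, hzγ⟩)
      have hynot : y ∉ (γ.filter (fun z : A => (z:WithTop A) < x)).erase m := by
        intro hy
        obtain ⟨hym', hyγ'⟩ := Finset.mem_erase.mp hy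
        have hyγ : y ∈ γ := (Finset.mem_filter.mp hyγ').1
        have hmy : m ≤ y := Finset.min'_le _ _ (Finset.mem_filter.mpr ⟨hyγ, le_rfl⟩)
        exact hym' (le_antisymm hym hmy)
      have hmf : m ∈ γ.filter (fun z : A => (z:WithTop A) < x) :=
        Finset.mem_filter.mpr ⟨hmγ, hpm⟩
      have h1 : ((γ.filter (fun z : A => (z:WithTop A) < x)).erase m).card
          = (γ.filter (fun z : A => (z:WithTop A) < x)).card - 1 :=
        Finset.card_erase_of_mem hmf
      have h2 : 1 ≤ (γ.filter (fun z : A => (z:WithTop A) < x)).card :=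
        Finset.card_pos.mpr ⟨m, hmf⟩
      have h3 := Finset.card_le_card hsub
      rw [Finset.card_insert_of_notMem hynot, h1] at h3
      unfold nu
      omega
    · refine Finset.card_le_card (fun z hz => ?_)
      obtain ⟨hzγ, hpz⟩ := Finset.mem_filter.mp hz
      have hzm : z ≠ m := fun he => hpm (he ▸ hpz)
      refine Finset.mem_filter.mpr ⟨?_, hpz⟩
      rw [colInsert_bump y γ h]
      exact Finset.mem_insert_of_mem (Finset.mem_erase.mpr ⟨hzm, hzγ⟩)
  · rw [colInsert_nobump y γ h]
    exact nu_mono_set x (Finset.subset_insert _ _)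

lemma nu_colInsert_upper {x : WithTop A} {y : A} (γ : Finset A) (hyx : (y : WithTop A) < x) :
    nu x (colInsert y γ) ≤ max (nu x γ) (nu (y : WithTop A) γ + 1) := by
  by_cases h : (γ.filter (fun z => y ≤ z)).Nonempty
  · set m := (γ.filter (fun z => y ≤ z)).min' h with hm
    obtain ⟨hmγ, hym⟩ := min'_spec_mem y γ h
    by_cases hpm : (m : WithTop A) < x
    · have hsub : (colInsert y γ).filter (fun z : A => (z:WithTop A) < x)
          ⊆ insert y ((γ.filter (fun z : A => (z:WithTop A) < x)).erase m) := by
        intro z hz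
        obtain ⟨hzc, hpz⟩ := Finset.mem_filter.mp hz
        rw [colInsert_bump y γ h] at hzc
        rcases Finset.mem_insert.mp hzc with rfl | hzc
        · exact Finset.mem_insert_self _ _
        · obtain ⟨hzm, hzγ⟩ := Finset.mem_erase.mp hzc
          exact Finset.mem_insert_of_mem (Finset.mem_erase.mpr ⟨hzm,
            Finset.mem_filter.mpr ⟨hzγ, hpz⟩⟩)
      have hmf : m ∈ γ.filter (fun z : A => (z:WithTop A) < x) :=
        Finset.mem_filter.mpr ⟨hmγ, hpm⟩
      have h1 := Finset.card_le_card hsub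
      have h2 := Finset.card_insert_le y ((γ.filter (fun z : A => (z:WithTop A) < x)).erase m)
      have h3 : ((γ.filter (fun z : A => (z:WithTop A) < x)).erase m).card
          = (γ.filter (fun z : A => (z:WithTop A) < x)).card - 1 :=
        Finset.card_erase_of_mem hmf
      have h4 : 1 ≤ (γ.filter (fun z : A => (z:WithTop A) < x)).card :=
        Finset.card_pos.mpr ⟨m, hmf⟩
      have : nu x (colInsert y γ) ≤ nu x γ := by unfold nu; omega
      exact this.trans (le_max_left _ _)
    · have hxy : nu x γ ≤ nu (y : WithTop A) γ := by
        refine Finset.card_le_card (fun z hz => ?_)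
        obtain ⟨hzγ, hpz⟩ := Finset.mem_filter.mp hz
        refine Finset.mem_filter.mpr ⟨hzγ, ?_⟩
        rcases lt_or_ge z y with hzy | hzy
        · exact WithTop.coe_lt_coe.mpr hzy
        · exact absurd (lt_of_le_of_lt (WithTop.coe_le_coe.mpr
            (Finset.min'_le _ _ (Finset.mem_filter.mpr ⟨hzγ, hzy⟩))) hpz) hpm
      have hsub : (colInsert y γ).filter (fun z : A => (z:WithTop A) < x)
          ⊆ insert y (γ.filter (fun z : A => (z:WithTop A) < x)) := by
        intro z hz
        obtain ⟨hzc, hpz⟩ := Finset.mem_filter.mp hz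
        rcases Finset.mem_insert.mp (colInsert_subset_insert y γ hzc) with rfl | hzγ
        · exact Finset.mem_insert_self _ _
        · exact Finset.mem_insert_of_mem (Finset.mem_filter.mpr ⟨hzγ, hpz⟩)
      have h1 := Finset.card_le_card hsub
      have h2 := Finset.card_insert_le y (γ.filter (fun z : A => (z:WithTop A) < x))
      have : nu x (colInsert y γ) ≤ nu (y:WithTop A) γ + 1 := by unfold nu at *; omega
      exact this.trans (le_max_right _ _)
  · have hally : ∀ z ∈ γ, z < y := by
      intro z hz
      by_contra hzy
      exact h ⟨z, Finset.mem_filter.mpr ⟨hz, not_lt.mp hzy⟩⟩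
    have hxy : nu x γ ≤ nu (y : WithTop A) γ := by
      refine Finset.card_le_card (fun z hz => ?_)
      obtain ⟨hzγ, _⟩ := Finset.mem_filter.mp hz
      exact Finset.mem_filter.mpr ⟨hzγ, WithTop.coe_lt_coe.mpr (hally z hzγ)⟩
    rw [colInsert_nobump y γ h]
    have hsub : (insert y γ).filter (fun z : A => (z:WithTop A) < x)
        ⊆ insert y (γ.filter (fun z : A => (z:WithTop A) < x)) := by
      intro z hz
      obtain ⟨hzc, hpz⟩ := Finset.mem_filter.mp hz
      rcases Finset.mem_insert.mp hzc with rfl | hzγ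
      · exact Finset.mem_insert_self _ _
      · exact Finset.mem_insert_of_mem (Finset.mem_filter.mpr ⟨hzγ, hpz⟩)
    have h1 := Finset.card_le_card hsub
    have h2 := Finset.card_insert_le y (γ.filter (fun z : A => (z:WithTop A) < x))
    have : nu x (insert y γ) ≤ nu (y:WithTop A) γ + 1 := by unfold nu at *; omega
    exact this.trans (le_max_right _ _)

lemma nu_colAct_mono (x : WithTop A) (w : List A) (γ : Finset A) :
    nu x γ ≤ nu x (colAct w γ) := by
  induction w with
  | nil => exact le_rfl
  | cons y w ih => exact ih.trans (nu_colInsert_mono x y (colAct w γ))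

lemma nu_split {b : A} {x : WithTop A} (hbx : (b : WithTop A) ≤ x) (γ : Finset A) :
    nu x γ = nu (b : WithTop A) γ
      + (γ.filter (fun z : A => b ≤ z ∧ (z : WithTop A) < x)).card := by
  unfold nu
  have key := Finset.card_filter_add_card_filter_not
    (s := γ.filter (fun z : A => (z : WithTop A) < x)) (p := fun z => z < b)
  rw [Finset.filter_filter, Finset.filter_filter] at key
  have e1 : γ.filter (fun z : A => (z:WithTop A) < x ∧ z < b)
      = γ.filter (fun z : A => (z:WithTop A) < (b:WithTop A)) := by
    ext z
    simp only [Finset.mem_filter, WithTop.coe_lt_coe]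
    constructor
    · rintro ⟨h1, _, h3⟩; exact ⟨h1, h3⟩
    · rintro ⟨h1, h2⟩
      exact ⟨h1, lt_of_lt_of_le (WithTop.coe_lt_coe.mpr h2) hbx, h2⟩
  have e2 : γ.filter (fun z : A => (z:WithTop A) < x ∧ ¬ z < b)
      = γ.filter (fun z : A => b ≤ z ∧ (z:WithTop A) < x) := by
    ext z
    simp only [Finset.mem_filter, not_lt]
    tauto
  rw [e1, e2] at key
  omega

lemma nu_colAct_lower (w : List A) (γ : Finset A) :
    ∀ (x : WithTop A) (l : List A) (b : A), l.Sublist w → l.Pairwise (· > ·) →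
    (∀ z ∈ l, (z : WithTop A) < x) → b ∈ l → (∀ z ∈ l, b ≤ z) →
    nu (b : WithTop A) γ + l.length ≤ nu x (colAct w γ) := by
  induction w with
  | nil =>
    intro x l b hsub _ _ hb _
    rw [List.sublist_nil.mp hsub] at hb
    simp at hb
  | cons y w ih =>
    intro x l b hsub hp hlt hb hble
    rw [colAct_cons]
    cases hsub with
    | cons _ hsub' =>
      exact (ih x l b hsub' hp hlt hb hble).trans (nu_colInsert_mono x y (colAct w γ))
    | @cons_cons l' _ _ hsub' =>
      have hyx : (y : WithTop A) < x := hlt y List.mem_cons_self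
      rcases eq_or_ne l' [] with rfl | hl'
      · -- l = [y]
        have hby : b = y := by simpa using hb
        subst hby
        simp only [List.length_cons, List.length_nil]
        have := nu_colAct_mono (b : WithTop A) w γ
        have h2 := nu_colInsert_lower (colAct w γ) hyx
        omega
      · obtain ⟨c, hc⟩ := List.exists_mem_of_ne_nil l' hl'
        have hyc : y > c := (List.pairwise_cons.mp hp).1 c hc
        have hbl' : b ∈ l' := by
          rcases List.mem_cons.mp hb with rfl | h
          · exact absurd (hble c (List.mem_cons_of_mem _ hc)) (not_le.mpr hyc)
          · exact h
        have hlt' : ∀ z ∈ l', (z : WithTop A) < (y : WithTop A) := fun z hz =>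
          WithTop.coe_lt_coe.mpr ((List.pairwise_cons.mp hp).1 z hz)
        have hble' : ∀ z ∈ l', b ≤ z := fun z hz => hble z (List.mem_cons_of_mem _ hz)
        have h1 := ih (y : WithTop A) l' b hsub' (List.pairwise_cons.mp hp).2 hlt' hbl' hble'
        have h2 := nu_colInsert_lower (colAct w γ) hyx
        simp only [List.length_cons]
        omega

lemma nu_colAct_upper (w : List A) (γ : Finset A) (x : WithTop A) :
    nu x (colAct w γ) ≤ nu x γ ∨
    ∃ (l : List A) (b : A), l.Sublist w ∧ l.Pairwise (· > ·) ∧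
      (∀ z ∈ l, (z : WithTop A) < x) ∧ b ∈ l ∧ (∀ z ∈ l, b ≤ z) ∧
      nu x (colAct w γ) ≤ nu (b : WithTop A) γ + l.length := by
  induction w generalizing x with
  | nil => left; exact le_rfl
  | cons y w ih =>
    rw [colAct_cons]
    rcases le_or_gt x (y : WithTop A) with hxy | hyx
    · rw [nu_colInsert_of_le _ hxy]
      rcases ih x with h | ⟨l, b, h1, h2, h3, h4, h5, h6⟩
      · left; exact h
      · right; exact ⟨l, b, h1.cons y, h2, h3, h4, h5, h6⟩
    · have hmax := nu_colInsert_upper (colAct w γ) hyx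
      rcases max_cases (nu x (colAct w γ)) (nu (y : WithTop A) (colAct w γ) + 1) with
        ⟨heq, _⟩ | ⟨heq, _⟩
      · rw [heq] at hmax
        rcases ih x with h | ⟨l, b, h1, h2, h3, h4, h5, h6⟩
        · left; exact hmax.trans h
        · right; exact ⟨l, b, h1.cons y, h2, h3, h4, h5, hmax.trans h6⟩
      · rw [heq] at hmax
        rcases ih (y : WithTop A) with h | ⟨l, b, h1, h2, h3, h4, h5, h6⟩
        · right
          refine ⟨[y], y, (List.nil_sublist w).cons₂ y, List.pairwise_singleton _ _, ?_, ?_, ?_, ?_⟩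
          · intro z hz; rw [List.mem_singleton.mp hz]; exact hyx
          · exact List.mem_singleton_self _
          · intro z hz; rw [List.mem_singleton.mp hz]
          · simpa using hmax.trans (by omega)
        · right
          have hby : b < y := WithTop.coe_lt_coe.mp (h3 b h4)
          refine ⟨y :: l, b, h1.cons₂ y, ?_, ?_, List.mem_cons_of_mem _ h4, ?_, ?_⟩
          · exact List.pairwise_cons.mpr ⟨fun z hz => WithTop.coe_lt_coe.mp (h3 z hz), h2⟩
          · intro z hz
            rcases List.mem_cons.mp hz with rfl | hz
            · exact hyx
            · exact lt_trans (h3 z hz) hyx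
          · intro z hz
            rcases List.mem_cons.mp hz with rfl | hz
            · exact le_of_lt hby
            · exact h5 z hz
          · simp only [List.length_cons]
            omega

lemma card_filter_le_succ {γ δ : Finset A} {z : A}
    (hlow : ∀ t, t < z → (t ∈ γ ↔ t ∈ δ)) (hzγ : z ∈ γ) (hzδ : z ∉ δ) :
    (δ.filter (fun t => t ≤ z)).card + 1 = (γ.filter (fun t => t ≤ z)).card := by
  have e : δ.filter (fun t => t ≤ z) = (γ.filter (fun t => t ≤ z)).erase z := by
    ext t
    simp only [Finset.mem_filter, Finset.mem_erase]
    constructor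
    · rintro ⟨htδ, htz⟩
      have hne : t ≠ z := fun he => hzδ (he ▸ htδ)
      exact ⟨hne, (hlow t (lt_of_le_of_ne htz hne)).mpr htδ, htz⟩
    · rintro ⟨hne, htγ, htz⟩
      exact ⟨(hlow t (lt_of_le_of_ne htz hne)).mp htγ, htz⟩
  have hzm : z ∈ γ.filter (fun t => t ≤ z) := Finset.mem_filter.mpr ⟨hzγ, le_rfl⟩
  rw [e, Finset.card_erase_of_mem hzm]
  have : 1 ≤ (γ.filter (fun t => t ≤ z)).card := Finset.card_pos.mpr ⟨z, hzm⟩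
  omega

lemma eq_of_nu_eq [Fintype A] {γ δ : Finset A}
    (h : ∀ x : WithTop A, nu x γ = nu x δ) : γ = δ := by
  by_contra hne
  have hE : ((γ \ δ) ∪ (δ \ γ)).Nonempty := by
    rw [Finset.nonempty_iff_ne_empty]
    intro he
    rw [Finset.union_eq_empty] at he
    exact hne (Finset.Subset.antisymm
      (Finset.sdiff_eq_empty_iff_subset.mp he.1) (Finset.sdiff_eq_empty_iff_subset.mp he.2))
  set E := (γ \ δ) ∪ (δ \ γ) with hEdef
  set z := E.min' hE with hz
  have hzE : z ∈ E := E.min'_mem hE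
  have hmin : ∀ t ∈ E, z ≤ t := fun t ht => E.min'_le t ht
  have hlow : ∀ t, t < z → (t ∈ γ ↔ t ∈ δ) := by
    intro t ht
    by_contra hc
    have htE : t ∈ E := by
      simp only [hEdef, Finset.mem_union, Finset.mem_sdiff]
      tauto
    exact absurd (hmin t htE) (not_le.mpr ht)
  set x : WithTop A := if hx : ((Finset.univ : Finset A).filter (fun t => z < t)).Nonempty
    then (((Finset.univ : Finset A).filter (fun t => z < t)).min' hx : A) else ⊤ with hxdef
  have key : ∀ t : A, ((t : WithTop A) < x ↔ t ≤ z) := by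
    intro t
    constructor
    · intro htx
      by_contra hzt
      push_neg at hzt
      have hne' : ((Finset.univ : Finset A).filter (fun t => z < t)).Nonempty :=
        ⟨t, Finset.mem_filter.mpr ⟨Finset.mem_univ _, hzt⟩⟩
      rw [hxdef, dif_pos hne'] at htx
      exact absurd (Finset.min'_le _ t (Finset.mem_filter.mpr ⟨Finset.mem_univ _, hzt⟩))
        (not_le.mpr (WithTop.coe_lt_coe.mp htx))
    · intro htz
      rw [hxdef]
      split_ifs with hx
      · have hm := ((Finset.univ : Finset A).filter (fun t => z < t)).min'_mem hx
        have : z < ((Finset.univ : Finset A).filter (fun t => z < t)).min' hx :=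
          (Finset.mem_filter.mp hm).2
        exact WithTop.coe_lt_coe.mpr (lt_of_le_of_lt htz this)
      · exact WithTop.coe_lt_top t
  have hγ : nu x γ = (γ.filter (fun t => t ≤ z)).card := by
    unfold nu; congr 1; ext t
    simp only [Finset.mem_filter, key]
  have hδ : nu x δ = (δ.filter (fun t => t ≤ z)).card := by
    unfold nu; congr 1; ext t
    simp only [Finset.mem_filter, key]
  have hx := h x
  rw [hγ, hδ] at hx
  rcases Finset.mem_union.mp hzE with hz1 | hz1
  · obtain ⟨h1, h2⟩ := Finset.mem_sdiff.mp hz1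
    have := card_filter_le_succ hlow h1 h2
    omega
  · obtain ⟨h1, h2⟩ := Finset.mem_sdiff.mp hz1
    have := card_filter_le_succ (fun t ht => (hlow t ht).symm) h1 h2
    omega

def sortedDesc (S : Finset A) : List A := (S.sort (· ≤ ·)).reverse

lemma mem_sortedDesc {S : Finset A} {z : A} : z ∈ sortedDesc S ↔ z ∈ S := by
  simp [sortedDesc, Finset.mem_sort]

lemma sortedDesc_pairwise (S : Finset A) : (sortedDesc S).Pairwise (· > ·) := by
  rw [sortedDesc, List.pairwise_reverse]
  exact (Finset.sortedLT_sort S).pairwise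

lemma colAct_sortedDesc_empty (S : Finset A) : colAct (sortedDesc S) ∅ = S := by
  apply Finset.Subset.antisymm
  · refine (colAct_subset _ _).trans ?_
    intro z hz
    rcases Finset.mem_union.mp hz with h | h
    · simp at h
    · rw [List.mem_toFinset] at h
      exact mem_sortedDesc.mp h
  · intro z hz
    exact mem_colAct_of_pairwise (sortedDesc_pairwise S) (mem_sortedDesc.mpr hz) ∅

lemma main_lemma [Fintype A] {w : List A}
    (hid : ∀ γ : Finset A, colAct w (colAct w γ) = colAct w γ) (γ : Finset A) :
    colAct w γ = colAct (sortedDesc (colAct w ∅)) γ := by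
  set S := colAct w ∅ with hS
  set ws := sortedDesc S with hws
  have hSsub : ∀ δ : Finset A, S ⊆ colAct w δ :=
    fun δ => hS ▸ colAct_mono w (Finset.empty_subset δ)
  have hSws : ∀ δ : Finset A, S ⊆ colAct ws δ := fun δ z hz =>
    mem_colAct_of_pairwise (hws ▸ sortedDesc_pairwise S) (mem_sortedDesc.mpr hz) δ
  apply eq_of_nu_eq
  intro x
  apply le_antisymm
  · rcases nu_colAct_upper w γ x with h | ⟨l, b, h1, h2, h3, h4, h5, h6⟩
    · exact h.trans (nu_colAct_mono x ws γ)
    · have hbx : (b : WithTop A) < x := h3 b h4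
      have h7 : nu (b : WithTop A) S + l.length ≤ nu x (colAct w S) :=
        nu_colAct_lower w S x l b h1 h2 h3 h4 h5
      have hws0 : colAct w S = S := hid ∅
      rw [hws0] at h7
      have hsplitS := nu_split (le_of_lt hbx) S
      have hsplitF := nu_split (le_of_lt hbx) (colAct ws γ)
      have hm1 : nu (b : WithTop A) γ ≤ nu (b : WithTop A) (colAct ws γ) :=
        nu_colAct_mono _ ws γ
      have hm2 : (S.filter (fun z : A => b ≤ z ∧ (z : WithTop A) < x)).card
          ≤ ((colAct ws γ).filter (fun z : A => b ≤ z ∧ (z : WithTop A) < x)).card :=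
        Finset.card_le_card (Finset.filter_subset_filter _ (hSws γ))
      omega
  · rcases nu_colAct_upper ws γ x with h | ⟨l, b, h1, h2, h3, h4, h5, h6⟩
    · exact h.trans (nu_colAct_mono x w γ)
    · have hbx : (b : WithTop A) < x := h3 b h4
      have hsplitE := nu_split (le_of_lt hbx) (colAct w γ)
      have hm1 : nu (b : WithTop A) γ ≤ nu (b : WithTop A) (colAct w γ) :=
        nu_colAct_mono _ w γ
      have hnodup : l.Nodup := h2.imp ne_of_gt
      have hsub2 : l.toFinset ⊆ (colAct w γ).filter
          (fun z : A => b ≤ z ∧ (z : WithTop A) < x) := by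
        intro z hz
        rw [List.mem_toFinset] at hz
        have hzS : z ∈ S := mem_sortedDesc.mp (hws ▸ h1.subset hz)
        exact Finset.mem_filter.mpr ⟨hSsub γ hzS, h5 z hz, h3 z hz⟩
      have hcard : l.toFinset.card = l.length := List.toFinset_card_of_nodup hnodup
      have h8 := Finset.card_le_card hsub2
      omega

end StylAux

open StylAux

/-- The idempotents of `Styl(A)` are exactly the images of the strictly
decreasing words, and there are exactly `2^{|A|}` of them. -/
theorem styl_idempotents {A : Type*} [LinearOrder A] [Fintype A] :
    {e : Function.End (Finset A) | e ∈ Set.range (colActEnd (A := A)) ∧ e * e = e} =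
      {e : Function.End (Finset A) |
        ∃ w : List A, w.Chain' (fun x y => y < x) ∧ colActEnd w = e} ∧
    Nat.card {e : Function.End (Finset A) //
        e ∈ Set.range (colActEnd (A := A)) ∧ e * e = e} = 2 ^ Fintype.card A := by
  constructor
  · ext e
    simp only [Set.mem_setOf_eq]
    constructor
    · rintro ⟨⟨w, rfl⟩, hid⟩
      have hid' : ∀ γ : Finset A, colAct w (colAct w γ) = colAct w γ :=
        fun γ => congrFun hid γ
      refine ⟨sortedDesc (colAct w ∅), ?_, ?_⟩
      · exact (sortedDesc_pairwise _).isChain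
      · funext γ
        exact (main_lemma hid' γ).symm
    · rintro ⟨w, hchain, rfl⟩
      have hp : w.Pairwise (· > ·) := List.isChain_iff_pairwise.mp hchain
      refine ⟨⟨w, rfl⟩, ?_⟩
      funext γ
      show colAct w (colAct w γ) = colAct w γ
      exact colAct_eq_self (fun z hz => mem_colAct_of_pairwise hp hz γ)
  · have equiv : {e : Function.End (Finset A) //
        e ∈ Set.range (colActEnd (A := A)) ∧ e * e = e} ≃ Finset A :=
      { toFun := fun e => e.1 ∅
        invFun := fun S => ⟨colActEnd (sortedDesc S), ⟨sortedDesc S, rfl⟩, by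
          funext γ
          show colAct _ (colAct _ γ) = colAct _ γ
          exact colAct_eq_self
            (fun z hz => mem_colAct_of_pairwise (sortedDesc_pairwise S) hz γ)⟩
        left_inv := by
          rintro ⟨e, ⟨w, rfl⟩, hid⟩
          have hid' : ∀ γ : Finset A, colAct w (colAct w γ) = colAct w γ :=
            fun γ => congrFun hid γ
          apply Subtype.ext
          funext γ
          show colAct (sortedDesc (colAct w ∅)) γ = colAct w γ
          exact (main_lemma hid' γ).symm
        right_inv := fun S => colAct_sortedDesc_empty S }
    rw [Nat.card_congr equiv, Nat.card_eq_fintype_card, Fintype.card_finset]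
end

section
/- N-insertion preserves N-tableaux: if T is an N-tableau and x a letter, then the result T←x of inserting x (add x to the first row, bumping the least row-element strictly greater than x into the next row, iteratively) is again an N-tableau. -/
/-- An `N`-tableau over a finite totally ordered alphabet `A`: a finite chain of
nonempty subsets (rows) `R₁ ⊋ R₂ ⊋ ⋯ ⊋ R_k` of `A` with
`min R₁ < min R₂ < ⋯ < min R_k`. -/
def IsNTableau {A : Type*} [LinearOrder A] (L : List (Finset A)) : Prop :=
  (∀ R ∈ L, R.Nonempty) ∧ L.Chain' (fun R S => S ⊂ R) ∧
    L.Chain' (fun R S => R.min < S.min)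

/-- `N`-insertion of a letter `x` into a tableau given by its list of rows: add
`x` to the first row; if that row contains an element strictly greater than `x`,
the smallest such element is bumped and inserted into the next row, iteratively
(possibly creating a new row). -/
def nInsert {A : Type*} [LinearOrder A] : A → List (Finset A) → List (Finset A)
  | x, [] => [{x}]
  | x, R :: rest =>
    if h : (R.filter (fun y => x < y)).Nonempty then
      insert x R :: nInsert ((R.filter (fun y => x < y)).min' h) rest
    else
      insert x R :: rest

lemma nInsert_head? {A : Type*} [LinearOrder A] (x : A) (L : List (Finset A)) :
    (nInsert x L).head? = some (insert x (L.headD ∅)) := by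
  cases L with
  | nil => simp [nInsert]
  | cons R rest =>
      rw [nInsert]
      split <;> simp

/-- `N`-insertion of a letter into an `N`-tableau produces an `N`-tableau. -/
theorem nInsert_isNTableau {A : Type*} [LinearOrder A] [Fintype A]
    (x : A) (L : List (Finset A)) (hL : IsNTableau L) :
    IsNTableau (nInsert x L) := by
  induction L generalizing x with
  | nil =>
      exact ⟨by simp [nInsert], by simp [nInsert, List.Chain'], by simp [nInsert, List.Chain']⟩
  | cons R rest ih =>
      obtain ⟨hne, hsub, hmin⟩ := hL
      rw [List.Chain', List.isChain_cons] at hsub hmin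
      have hR : R.Nonempty := hne R (by simp)
      have hrest : IsNTableau rest :=
        ⟨fun S hS => hne S (List.mem_cons_of_mem _ hS), hsub.2, hmin.2⟩
      rw [nInsert]
      split
      · next h =>
        set y := (R.filter (fun y => x < y)).min' h with hy
        have hymem : y ∈ R.filter (fun y => x < y) := Finset.min'_mem _ h
        rw [Finset.mem_filter] at hymem
        obtain ⟨hyR, hxy⟩ := hymem
        have IH := ih y hrest
        obtain ⟨IH1, IH2, IH3⟩ := IH
        refine ⟨?_, ?_, ?_⟩
        · intro S hS
          rcases List.mem_cons.mp hS with rfl | hS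
          · exact ⟨x, Finset.mem_insert_self _ _⟩
          · exact IH1 S hS
        · rw [List.Chain', List.isChain_cons]
          refine ⟨?_, IH2⟩
          intro H hH
          rw [nInsert_head? y rest] at hH
          cases hH
          cases rest with
          | nil =>
              simp only [List.headD_nil]
              constructor
              · intro z hz
                simp only [LawfulSingleton.insert_empty_eq, Finset.mem_singleton] at hz
                subst hz
                exact Finset.mem_insert_of_mem hyR
              · intro hc
                have := hc (Finset.mem_insert_self x R)
                simp only [LawfulSingleton.insert_empty_eq, Finset.mem_singleton] at this
                exact absurd this (ne_of_lt hxy)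
          | cons S rest' =>
              simp only [List.headD_cons]
              have hSR : S ⊂ R := hsub.1 S rfl
              have hminRS : R.min < S.min := hmin.1 S rfl
              have hsubs : insert y S ⊆ insert x R :=
                Finset.insert_subset (Finset.mem_insert_of_mem hyR)
                  (hSR.subset.trans (Finset.subset_insert _ _))
              refine ⟨hsubs, fun hc => ?_⟩
              by_cases hxS : x ∈ S
              · -- witness: min' R
                have hmR := Finset.min'_mem R hR
                have h1 : R.min' hR ∈ insert y S :=
                  hc (Finset.mem_insert_of_mem hmR)
                have hxR : x ∈ R := hSR.subset hxS
                have hmx : R.min' hR ≤ x := Finset.min'_le _ _ hxR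
                have hmy : R.min' hR < y := lt_of_le_of_lt hmx hxy
                rcases Finset.mem_insert.mp h1 with h1 | h1
                · exact absurd h1 (ne_of_lt hmy)
                · have h2 : S.min ≤ (R.min' hR : WithTop A) := Finset.min_le h1
                  have h3 : R.min < (R.min' hR : WithTop A) := lt_of_lt_of_le hminRS h2
                  rw [Finset.coe_min' hR] at h3
                  exact lt_irrefl _ h3
              · have h1 : x ∈ insert y S := hc (Finset.mem_insert_self x R)
                rcases Finset.mem_insert.mp h1 with h1 | h1
                · exact absurd h1 (ne_of_lt hxy)
                · exact hxS h1
        · rw [List.Chain', List.isChain_cons]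
          refine ⟨?_, IH3⟩
          intro m hm
          rw [nInsert_head? y rest] at hm
          cases hm
          rw [Finset.min_insert, Finset.min_insert]
          have hx_lt_y : (x : WithTop A) < (y : WithTop A) := by exact_mod_cast hxy
          cases rest with
          | nil =>
              simp only [List.headD_nil, Finset.min_empty]
              exact lt_of_le_of_lt (min_le_left _ _) (by simpa using hx_lt_y)
          | cons S rest' =>
              simp only [List.headD_cons]
              have hminRS : R.min < S.min := hmin.1 S rfl
              refine lt_min ?_ ?_
              · exact lt_of_le_of_lt (min_le_left _ _) hx_lt_y
              · exact lt_of_le_of_lt (min_le_right _ _) hminRS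
      · next h =>
        have hRx : ∀ z ∈ R, z ≤ x := by
          intro z hz
          by_contra hc
          exact h ⟨z, Finset.mem_filter.mpr ⟨hz, lt_of_not_ge hc⟩⟩
        refine ⟨?_, ?_, ?_⟩
        · intro S hS
          rcases List.mem_cons.mp hS with rfl | hS
          · exact ⟨x, Finset.mem_insert_self _ _⟩
          · exact hne S (List.mem_cons_of_mem _ hS)
        · rw [List.Chain', List.isChain_cons]
          refine ⟨?_, hsub.2⟩
          intro S hS
          have := hsub.1 S hS
          exact this.trans_subset (Finset.subset_insert _ _)
        · rw [List.Chain', List.isChain_cons]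
          refine ⟨?_, hmin.2⟩
          intro m hm
          have hmr := hmin.1 m hm
          rw [Finset.min_insert]
          exact lt_of_le_of_lt (min_le_right _ _) hmr
end

section
/- Let n ≥ 2 and letters a_n > ⋯ > a₂ > a₁ in A, and let u be such that a_n⋯a₃a₁u is a strictly decreasing word. Viewing columns as strictly decreasing words, the action of the word a_{n-1}⋯a₂ on the column a_n⋯a₃a₁u yields the column a_{n-1}⋯a₂a₁u. -/
def Good {A : Type*} [LinearOrder A] : List A → List A → Prop
  | [], [] => True
  | x :: c, y :: d => x < y ∧ (∀ z ∈ c, z < x) ∧ (∀ z ∈ d, z < y) ∧ Good c d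
  | _, _ => False

lemma key {A : Type*} [LinearOrder A] : ∀ (c d : List A) (S : Finset A),
    Good c d →
    (∀ s ∈ S, ∀ p ∈ c.zip d, ¬(p.1 ≤ s ∧ s ≤ p.2)) →
    colAct c (d.toFinset ∪ S) = c.toFinset ∪ S
  | [], [], S, _, _ => by simp [colAct]
  | [], _ :: _, S, hg, _ => absurd hg (by simp [Good])
  | _ :: _, [], S, hg, _ => absurd hg (by simp [Good])
  | x :: c, y :: d, S, hg, hS => by
    obtain ⟨h1, h2, h3, h4⟩ := hg
    have hS' : ∀ s ∈ insert y S, ∀ p ∈ c.zip d, ¬(p.1 ≤ s ∧ s ≤ p.2) := by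
      intro s hs p hp
      rcases Finset.mem_insert.mp hs with rfl | hs
      · rintro ⟨_, hle⟩
        exact absurd (hle.trans_lt (h3 _ (List.of_mem_zip hp).2)) (lt_irrefl _)
      · exact hS s hs p (List.mem_cons_of_mem _ hp)
    have hset : ((y :: d).toFinset : Finset A) ∪ S = d.toFinset ∪ insert y S := by
      simp [Finset.insert_union, Finset.union_insert]
    have hrec := key c d (insert y S) h4 hS'
    have step : colAct (x :: c) ((y :: d).toFinset ∪ S)
        = colInsert x (c.toFinset ∪ insert y S) := by
      show colInsert x (colAct c ((y :: d).toFinset ∪ S)) = _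
      rw [hset, hrec]
    rw [step]
    -- compute the insertion
    set X : Finset A := c.toFinset ∪ insert y S with hX
    have hyX : y ∈ X.filter (fun z => x ≤ z) := by
      simp [hX, le_of_lt h1]
    have hne : (X.filter (fun z => x ≤ z)).Nonempty := ⟨y, hyX⟩
    have hxy : ∀ s ∈ S, ¬(x ≤ s ∧ s ≤ y) := by
      intro s hs
      exact hS s hs (x, y) (by simp [List.zip_cons_cons])
    have hmin : (X.filter (fun z => x ≤ z)).min' hne = y := by
      apply le_antisymm (Finset.min'_le _ y hyX)
      apply Finset.le_min'
      intro z hz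
      rw [Finset.mem_filter] at hz
      obtain ⟨hzX, hxz⟩ := hz
      rcases Finset.mem_union.mp hzX with hzc | hzS
      · exact absurd (lt_of_le_of_lt hxz (h2 z (List.mem_toFinset.mp hzc))) (lt_irrefl _)
      · rcases Finset.mem_insert.mp hzS with rfl | hzS
        · exact le_refl _
        · exact le_of_lt (lt_of_not_ge fun h => hxy z hzS ⟨hxz, h⟩)
    have hynot : y ∉ c.toFinset ∪ S := by
      intro h
      rcases Finset.mem_union.mp h with h | h
      · exact absurd (lt_trans (h2 y (List.mem_toFinset.mp h)) h1) (lt_irrefl _)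
      · exact hxy y h ⟨le_of_lt h1, le_refl _⟩
    have herase : X.erase y = c.toFinset ∪ S := by
      ext z
      simp only [hX, Finset.mem_erase, Finset.mem_union, Finset.mem_insert]
      constructor
      · rintro ⟨hzy, hc | (rfl | hs)⟩
        · exact Or.inl hc
        · exact absurd rfl hzy
        · exact Or.inr hs
      · intro h
        refine ⟨?_, ?_⟩
        · rintro rfl; exact hynot (Finset.mem_union.mpr h)
        · rcases h with h | h
          · exact Or.inl h
          · exact Or.inr (Or.inr h)
    rw [colInsert, dif_pos hne, hmin, herase]
    simp [Finset.insert_union]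

lemma good_of_maps {A : Type*} [LinearOrder A] : ∀ (m : ℕ) (f g : ℕ → A),
    (∀ i, i < m → f i < g i) →
    (∀ i j, i < j → j < m → f j < f i) →
    (∀ i j, i < j → j < m → g j < g i) →
    Good ((List.range m).map f) ((List.range m).map g)
  | 0, f, g, _, _, _ => by simp [Good]
  | m + 1, f, g, hfg, hf, hg => by
    rw [List.range_succ_eq_map, List.map_cons, List.map_cons, List.map_map, List.map_map]
    refine ⟨hfg 0 (Nat.succ_pos m), ?_, ?_, ?_⟩
    · intro z hz
      simp only [List.mem_map, List.mem_range, Function.comp] at hz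
      obtain ⟨i, hi, rfl⟩ := hz
      exact hf 0 (i + 1) (Nat.succ_pos i) (by omega)
    · intro z hz
      simp only [List.mem_map, List.mem_range, Function.comp] at hz
      obtain ⟨i, hi, rfl⟩ := hz
      exact hg 0 (i + 1) (Nat.succ_pos i) (by omega)
    · exact good_of_maps m (f ∘ Nat.succ) (g ∘ Nat.succ)
        (fun i hi => hfg (i + 1) (by omega))
        (fun i j hij hj => hf (i + 1) (j + 1) (by omega) (by omega))
        (fun i j hij hj => hg (i + 1) (j + 1) (by omega) (by omega))

/-- Let `n ≥ 2` and letters `a n > ⋯ > a 2 > a 1`, and `u` such that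
`a n ⋯ a 3 a 1 u` is a strictly decreasing word. Then the action of the word
`a (n-1) ⋯ a 2` on the column `a n ⋯ a 3 a 1 u` is the column
`a (n-1) ⋯ a 2 a 1 u` (columns identified with strictly decreasing words, i.e.
with their sets of letters). -/
theorem colAct_decreasing_segment {A : Type*} [LinearOrder A] [Fintype A]
    (n : ℕ) (hn : 2 ≤ n) (a : ℕ → A) (u : List A)
    (ha : ∀ i j : ℕ, 1 ≤ i → i < j → j ≤ n → a i < a j)
    (hcol : List.Chain' (fun x y => y < x)
      (((List.range (n - 2)).map (fun i => a (n - i))) ++ a 1 :: u)) :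
    colAct ((List.range (n - 2)).map (fun i => a (n - 1 - i)))
        ((((List.range (n - 2)).map (fun i => a (n - i))) ++ a 1 :: u).toFinset) =
      ((((List.range (n - 2)).map (fun i => a (n - 1 - i))) ++ a 1 :: u).toFinset) := by
  set m := n - 2 with hm
  set f : ℕ → A := fun i => a (n - 1 - i) with hf
  set g : ℕ → A := fun i => a (n - i) with hg
  set S : Finset A := (a 1 :: u).toFinset with hSdef
  have hgood : Good ((List.range m).map f) ((List.range m).map g) := by
    apply good_of_maps
    · intro i hi
      exact ha (n - 1 - i) (n - i) (by omega) (by omega) (by omega)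
    · intro i j hij hj
      exact ha (n - 1 - j) (n - 1 - i) (by omega) (by omega) (by omega)
    · intro i j hij hj
      exact ha (n - j) (n - i) (by omega) (by omega) (by omega)
  -- elements of S are ≤ a 1
  have hchain : List.Chain' (fun x y => y < x) (a 1 :: u) :=
    hcol.suffix (List.suffix_append _ _)
  haveI : IsTrans A (fun x y : A => y < x) := ⟨fun x y z h1 h2 => h2.trans h1⟩
  have hu : ∀ z ∈ u, z < a 1 :=
    (List.pairwise_cons.mp (List.isChain_iff_pairwise.mp hchain)).1
  have hSle : ∀ s ∈ S, s ≤ a 1 := by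
    intro s hs
    rcases List.mem_cons.mp (List.mem_toFinset.mp hs) with rfl | hs
    · exact le_refl _
    · exact le_of_lt (hu s hs)
  have hScond : ∀ s ∈ S, ∀ p ∈ ((List.range m).map f).zip ((List.range m).map g),
      ¬(p.1 ≤ s ∧ s ≤ p.2) := by
    intro s hs p hp
    rw [List.zip_map'] at hp
    simp only [List.mem_map, List.mem_range] at hp
    obtain ⟨i, hi, rfl⟩ := hp
    rintro ⟨hle, -⟩
    have h12 : a 1 < a 2 := ha 1 2 le_rfl one_lt_two hn
    have h2f : a 2 ≤ f i := by
      rcases eq_or_lt_of_le (show 2 ≤ n - 1 - i by omega) with h | h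
      · exact le_of_eq (by rw [hf]; simp only; rw [← h])
      · exact le_of_lt (ha 2 (n - 1 - i) one_le_two h (by omega))
    exact absurd (lt_of_le_of_lt (hle.trans (hSle s hs)) (h12.trans_le h2f)) (lt_irrefl _)
  have := key ((List.range m).map f) ((List.range m).map g) S hgood hScond
  rw [List.toFinset_append, List.toFinset_append]
  exact this
end

section
/- The stylic monoid Styl(A) is the syntactic monoid of the function f : A* → ℕ sending each word w to the maximal length of a strictly decreasing subsequence of w; that is, u ≡_styl v if and only if f(xuy) = f(xvy) for all words x, y. -/
/-- `f w`: the maximal length of a strictly decreasing subsequence of `w`. -/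
def maxDecLen {A : Type*} [LinearOrder A] (w : List A) : ℕ :=
  ((w.sublists.filter (fun l => decide (l.IsChain (fun x y => y < x)))).map
    List.length).foldr max 0

set_option linter.unusedSectionVars false

namespace Styl
variable {A : Type*} [LinearOrder A]

/-- `p` describes an initial segment of the order. -/
def IsLower (p : A → Bool) : Prop := ∀ ⦃y z : A⦄, p y → z ≤ y → p z

lemma colAct_append (u v : List A) (γ : Finset A) :
    colAct (u ++ v) γ = colAct u (colAct v γ) := List.foldr_append ..

lemma mem_colInsert_self (x : A) (γ : Finset A) : x ∈ colInsert x γ := by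
  unfold colInsert; split <;> exact Finset.mem_insert_self x _

lemma colInsert_of_forall_lt {x : A} {γ : Finset A} (h : ∀ y ∈ γ, y < x) :
    colInsert x γ = insert x γ := by
  unfold colInsert
  rw [dif_neg]
  rintro ⟨y, hy⟩
  rw [Finset.mem_filter] at hy
  exact absurd (h y hy.1) (not_lt.2 hy.2)

lemma mem_colInsert_of_lt {y x : A} {γ : Finset A} (hy : y ∈ γ) (h : y < x) :
    y ∈ colInsert x γ := by
  unfold colInsert
  split
  case isTrue hne =>
    apply Finset.mem_insert_of_mem
    refine Finset.mem_erase.2 ⟨?_, hy⟩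
    intro he
    have := Finset.mem_filter.1 (Finset.min'_mem _ hne)
    exact absurd (he ▸ this.2) (not_le.2 h)
  case isFalse => exact Finset.mem_insert_of_mem hy

lemma mem_colAct_of_forall_lt {y : A} {w : List A} {γ : Finset A}
    (hy : y ∈ γ) (h : ∀ z ∈ w, y < z) : y ∈ colAct w γ := by
  induction w with
  | nil => exact hy
  | cons a t ih =>
      exact mem_colInsert_of_lt (ih (fun z hz => h z (List.mem_cons_of_mem a hz)))
        (h a List.mem_cons_self)

lemma card_colInsert (x : A) (γ : Finset A) :
    (colInsert x γ).card =
      if (γ.filter (fun y => x ≤ y)).Nonempty then γ.card else γ.card + 1 := by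
  unfold colInsert
  split
  case isTrue h =>
    have hmem := Finset.mem_filter.1 (Finset.min'_mem _ h)
    have hx : x ∉ γ.erase ((γ.filter (fun y => x ≤ y)).min' h) := by
      intro hx
      have h1 := Finset.mem_erase.1 hx
      have : (γ.filter (fun y => x ≤ y)).min' h ≤ x :=
        Finset.min'_le _ _ (Finset.mem_filter.2 ⟨h1.2, le_refl x⟩)
      exact h1.1 (le_antisymm hmem.2 this)
    rw [Finset.card_insert_of_notMem hx, Finset.card_erase_of_mem hmem.1]
    have : 0 < γ.card := Finset.card_pos.2 ⟨_, hmem.1⟩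
    omega
  case isFalse h =>
    have hx : x ∉ γ := fun hx => h ⟨x, Finset.mem_filter.2 ⟨hx, le_refl x⟩⟩
    rw [Finset.card_insert_of_notMem hx]

lemma card_le_card_colInsert (x : A) (γ : Finset A) :
    γ.card ≤ (colInsert x γ).card := by
  rw [card_colInsert]; split <;> omega

end Styl

namespace Styl
variable {A : Type*} [LinearOrder A]

lemma colInsert_filter (p : A → Bool) (hp : IsLower p) (x : A) (γ : Finset A) :
    (colInsert x γ).filter (fun a => p a) =
      if p x then colInsert x (γ.filter (fun a => p a)) else γ.filter (fun a => p a) := by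
  set F := γ.filter (fun a => p a) with hF
  have hsub : F.filter (fun y => x ≤ y) ⊆ γ.filter (fun y => x ≤ y) := by
    apply Finset.filter_subset_filter
    exact Finset.filter_subset _ _
  by_cases hpx : p x
  · rw [if_pos hpx]
    unfold colInsert
    by_cases hγ : (γ.filter (fun y => x ≤ y)).Nonempty
    · rw [dif_pos hγ]
      set y := (γ.filter (fun y => x ≤ y)).min' hγ with hy
      have hymem := Finset.mem_filter.1 (Finset.min'_mem _ hγ)
      have lhs : (insert x (γ.erase y)).filter (fun a => p a) = insert x (F.erase y) := by
        rw [Finset.filter_insert, if_pos hpx, Finset.filter_erase]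
      rw [lhs]
      by_cases hpy : p y
      · have hyF : y ∈ F.filter (fun y => x ≤ y) :=
          Finset.mem_filter.2 ⟨Finset.mem_filter.2 ⟨hymem.1, hpy⟩, hymem.2⟩
        have hFne : (F.filter (fun y => x ≤ y)).Nonempty := ⟨y, hyF⟩
        rw [dif_pos hFne]
        congr 1
        have h1 : y ≤ (F.filter (fun y => x ≤ y)).min' hFne :=
          Finset.min'_le _ _ (hsub (Finset.min'_mem _ hFne))
        have h2 : (F.filter (fun y => x ≤ y)).min' hFne ≤ y := Finset.min'_le _ _ hyF
        rw [le_antisymm h2 h1]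
      · have hFe : ¬ (F.filter (fun y => x ≤ y)).Nonempty := by
          rintro ⟨z, hz⟩
          rw [Finset.mem_filter, Finset.mem_filter] at hz
          have hyz : y ≤ z := Finset.min'_le _ _ (Finset.mem_filter.2 ⟨hz.1.1, hz.2⟩)
          exact hpy (hp hz.1.2 hyz)
        rw [dif_neg hFe]
        have : y ∉ F := fun h => hpy (Finset.mem_filter.1 h).2
        rw [Finset.erase_eq_of_notMem this]
    · rw [dif_neg hγ]
      have hFe : ¬ (F.filter (fun y => x ≤ y)).Nonempty := fun ⟨z, hz⟩ => hγ ⟨z, hsub hz⟩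
      rw [dif_neg hFe, Finset.filter_insert, if_pos hpx]
  · rw [if_neg hpx]
    unfold colInsert
    by_cases hγ : (γ.filter (fun y => x ≤ y)).Nonempty
    · rw [dif_pos hγ]
      set y := (γ.filter (fun y => x ≤ y)).min' hγ with hy
      have hymem := Finset.mem_filter.1 (Finset.min'_mem _ hγ)
      have hpy : ¬ p y := fun h => hpx (hp h hymem.2)
      rw [Finset.filter_insert, if_neg hpx, Finset.filter_erase]
      exact Finset.erase_eq_of_notMem (fun h => hpy (Finset.mem_filter.1 h).2)
    · rw [dif_neg hγ, Finset.filter_insert, if_neg hpx]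

lemma colAct_filter (p : A → Bool) (hp : IsLower p) (w : List A) (γ : Finset A) :
    (colAct w γ).filter (fun a => p a) =
      colAct (w.filter p) (γ.filter (fun a => p a)) := by
  induction w with
  | nil => rfl
  | cons a t ih =>
      show (colInsert a (colAct t γ)).filter (fun a => p a) = _
      rw [colInsert_filter p hp, ih]
      by_cases hpa : p a
      · rw [if_pos hpa, List.filter_cons_of_pos hpa]; rfl
      · rw [if_neg hpa, List.filter_cons_of_neg (by simpa using hpa)]

end Styl

namespace Styl
variable {A : Type*} [LinearOrder A]

/-- The strictly decreasing word listing the elements of a column. -/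
def descList (γ : Finset A) : List A := (γ.sort (· ≤ ·)).reverse

lemma asc_colAct : ∀ (l : List A), l.IsChain (· < ·) → ∀ γ : Finset A,
    (∀ y ∈ γ, ∀ z ∈ l, y < z) → colAct l.reverse γ = γ ∪ l.toFinset := by
  intro l
  induction l with
  | nil => intro _ γ _; simp [colAct]
  | cons x t ih =>
      intro hc γ hlt
      have hxt : ∀ z ∈ t, x < z := by
        have := List.isChain_iff_pairwise.1 hc
        exact fun z hz => (List.pairwise_cons.1 this).1 z hz
      have h1 : colAct (x :: t).reverse γ = colAct t.reverse (colInsert x γ) := by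
        rw [List.reverse_cons, colAct_append]; rfl
      rw [h1, colInsert_of_forall_lt (fun y hy => hlt y hy x List.mem_cons_self),
        ih (hc.tail) _ ?_]
      · rw [List.toFinset_cons, Finset.insert_union, Finset.union_insert]
      · intro y hy z hz
        rcases Finset.mem_insert.1 hy with rfl | hy
        · exact hxt z hz
        · exact hlt y hy z (List.mem_cons_of_mem x hz)

lemma colAct_descList_empty (γ : Finset A) : colAct (descList γ) ∅ = γ := by
  have h := asc_colAct (γ.sort (· ≤ ·))
    (List.sortedLT_iff_isChain.1 (γ.sortedLT_sort)) ∅ (by simp)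
  rw [descList, h, Finset.empty_union, Finset.sort_toFinset]

lemma asc_subset : ∀ (l : List A), l.IsChain (· < ·) → ∀ γ : Finset A,
    l.toFinset ⊆ colAct l.reverse γ := by
  intro l
  induction l with
  | nil => intro _ γ; simp
  | cons x t ih =>
      intro hc γ
      have hxt : ∀ z ∈ t, x < z := by
        have := List.isChain_iff_pairwise.1 hc
        exact fun z hz => (List.pairwise_cons.1 this).1 z hz
      have h1 : colAct (x :: t).reverse γ = colAct t.reverse (colInsert x γ) := by
        rw [List.reverse_cons, colAct_append]; rfl
      rw [h1, List.toFinset_cons]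
      intro y hy
      rcases Finset.mem_insert.1 hy with rfl | hy
      · exact mem_colAct_of_forall_lt (mem_colInsert_self y γ)
          (fun z hz => hxt z (List.mem_reverse.1 hz))
      · exact ih hc.tail _ hy

lemma subset_colAct_descList (δ : Finset A) (γ : Finset A) :
    δ ⊆ colAct (descList δ) γ := by
  have := asc_subset (δ.sort (· ≤ ·)) (List.sortedLT_iff_isChain.1 (δ.sortedLT_sort)) γ
  rwa [Finset.sort_toFinset] at this

lemma colAct_desc_compl [Fintype A] (p : A → Bool) (hp : IsLower p) (μ : Finset A) :
    colAct (descList (Finset.univ.filter (fun z => !(p z)))) μ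
      = Finset.univ.filter (fun z => !(p z)) ∪ μ.filter (fun a => p a) := by
  set B := Finset.univ.filter (fun z => !(p z)) with hB
  set T := colAct (descList B) μ with hT
  have hnil : (descList B).filter p = [] := by
    rw [List.filter_eq_nil_iff]
    intro a ha
    have : a ∈ B := by
      rw [descList, List.mem_reverse, Finset.mem_sort] at ha
      exact ha
    rw [hB, Finset.mem_filter] at this
    simpa using this.2
  have hTp : T.filter (fun a => p a) = μ.filter (fun a => p a) := by
    rw [hT, colAct_filter p hp, hnil]; rfl
  apply Finset.Subset.antisymm
  · intro t ht
    by_cases hpt : p t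
    · exact Finset.mem_union_right _ (hTp ▸ Finset.mem_filter.2 ⟨ht, hpt⟩)
    · exact Finset.mem_union_left _ (Finset.mem_filter.2 ⟨Finset.mem_univ t, by simpa using hpt⟩)
  · apply Finset.union_subset
    · exact subset_colAct_descList B μ
    · rw [← hTp]; exact Finset.filter_subset _ _

lemma card_colAct_desc_compl [Fintype A] (p : A → Bool) (hp : IsLower p) (μ : Finset A) :
    (colAct (descList (Finset.univ.filter (fun z => !(p z)))) μ).card
      = (Finset.univ.filter (fun z => !(p z))).card + (μ.filter (fun a => p a)).card := by
  rw [colAct_desc_compl p hp]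
  apply Finset.card_union_of_disjoint
  rw [Finset.disjoint_left]
  intro a ha hb
  have h1 := (Finset.mem_filter.1 ha).2
  have h2 := (Finset.mem_filter.1 hb).2
  simp [h2] at h1

end Styl

namespace Styl
variable {A : Type*} [LinearOrder A]

private lemma trans_gt : IsTrans A (fun x y => y < x) :=
  ⟨fun _ _ _ h1 h2 => lt_trans h2 h1⟩

lemma le_foldr_max {L : List ℕ} {a : ℕ} (h : a ∈ L) : a ≤ L.foldr max 0 := by
  induction L with
  | nil => simp at h
  | cons b t ih =>
      rcases List.mem_cons.1 h with rfl | h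
      · exact le_max_left _ _
      · exact (ih h).trans (le_max_right _ _)

lemma foldr_max_cases (L : List ℕ) : L.foldr max 0 = 0 ∨ L.foldr max 0 ∈ L := by
  induction L with
  | nil => exact Or.inl rfl
  | cons b t ih =>
      rw [List.foldr_cons]
      rcases le_or_gt (t.foldr max 0) b with h | h
      · rw [max_eq_left h]; exact Or.inr List.mem_cons_self
      · rw [max_eq_right h.le]
        rcases ih with h0 | hm
        · exact Or.inl h0
        · exact Or.inr (List.mem_cons_of_mem _ hm)

lemma length_le_maxDecLen {l w : List A} (hs : l.Sublist w)
    (hc : l.Pairwise (fun x y => y < x)) : l.length ≤ maxDecLen w := by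
  apply le_foldr_max
  rw [List.mem_map]
  refine ⟨l, ?_, rfl⟩
  rw [List.mem_filter]
  refine ⟨List.mem_sublists.2 hs, ?_⟩
  rw [decide_eq_true_eq]
  exact (letI : Trans (fun x y : A => y < x) (fun x y : A => y < x) (fun x y : A => y < x) := ⟨fun h1 h2 => lt_trans h2 h1⟩; List.isChain_iff_pairwise).2 hc

lemma exists_maxDecLen (w : List A) :
    ∃ l : List A, l.Sublist w ∧ l.Pairwise (fun x y => y < x) ∧
      l.length = maxDecLen w := by
  have hc := foldr_max_cases
    ((w.sublists.filter (fun l => decide (l.IsChain (fun x y : A => y < x)))).map List.length)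
  rcases hc with h0 | hm
  · exact ⟨[], List.nil_sublist w, List.Pairwise.nil, by rw [maxDecLen, h0]; rfl⟩
  · rw [List.mem_map] at hm
    obtain ⟨l, hl, hlen⟩ := hm
    rw [List.mem_filter, decide_eq_true_eq] at hl
    exact ⟨l, List.mem_sublists.1 hl.1, (letI : Trans (fun x y : A => y < x) (fun x y : A => y < x) (fun x y : A => y < x) := ⟨fun h1 h2 => lt_trans h2 h1⟩; List.isChain_iff_pairwise).1 hl.2,
      hlen⟩

lemma isLower_le (a : A) : IsLower (fun z => decide (z ≤ a)) := by
  intro y z hy hz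
  rw [decide_eq_true_eq] at *
  exact hz.trans hy

lemma isLower_lt (a : A) : IsLower (fun z => decide (z < a)) := by
  intro y z hy hz
  rw [decide_eq_true_eq] at *
  exact hz.trans_lt hy

/-- L8: there is a strictly decreasing `p`-sublist as long as the `p`-part of the column. -/
lemma exists_dec_sublist (w : List A) : ∀ (p : A → Bool), IsLower p →
    ∃ l : List A, l.Sublist w ∧ l.Pairwise (fun x y => y < x) ∧ (∀ e ∈ l, p e) ∧
      l.length = ((colAct w ∅).filter (fun a => p a)).card := by
  induction w with
  | nil =>
      intro p hp
      exact ⟨[], List.nil_sublist _, List.Pairwise.nil, by simp, by simp [colAct]⟩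
  | cons x s ih =>
      intro p hp
      have hcons : colAct (x :: s) ∅ = colInsert x (colAct s ∅) := rfl
      rw [hcons, colInsert_filter p hp]
      by_cases hpx : p x
      · rw [if_pos hpx, card_colInsert]
        by_cases hne : (((colAct s ∅).filter (fun a => p a)).filter (fun y => x ≤ y)).Nonempty
        · rw [if_pos hne]
          obtain ⟨l, hsub, hpair, hall, hlen⟩ := ih p hp
          exact ⟨l, hsub.trans (List.sublist_cons_self x s), hpair, hall, hlen⟩
        · rw [if_neg hne]
          set q : A → Bool := fun z => decide (z < x) && p z with hq
          have hql : IsLower q := by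
            intro y z hy hz
            rw [hq, Bool.and_eq_true, decide_eq_true_eq] at *
            exact ⟨hz.trans_lt hy.1, hp hy.2 hz⟩
          obtain ⟨l, hsub, hpair, hall, hlen⟩ := ih q hql
          have hfq : (colAct s ∅).filter (fun a => q a)
              = (colAct s ∅).filter (fun a => p a) := by
            apply Finset.ext
            intro z
            rw [Finset.mem_filter, Finset.mem_filter, hq, Bool.and_eq_true,
              decide_eq_true_eq]
            constructor
            · rintro ⟨h1, h2, h3⟩; exact ⟨h1, h3⟩
            · rintro ⟨h1, h2⟩
              refine ⟨h1, ?_, h2⟩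
              by_contra hxz
              exact hne ⟨z, Finset.mem_filter.2 ⟨Finset.mem_filter.2 ⟨h1, h2⟩, not_lt.1 hxz⟩⟩
          refine ⟨x :: l, hsub.cons₂ x, ?_, ?_, ?_⟩
          · rw [List.pairwise_cons]
            refine ⟨fun e he => ?_, hpair⟩
            have := hall e he
            rw [hq, Bool.and_eq_true, decide_eq_true_eq] at this
            exact this.1
          · intro e he
            rcases List.mem_cons.1 he with rfl | he
            · exact hpx
            · have := hall e he
              rw [hq, Bool.and_eq_true] at this
              exact this.2
          · rw [List.length_cons, hlen, hfq]
      · rw [if_neg hpx]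
        obtain ⟨l, hsub, hpair, hall, hlen⟩ := ih p hp
        exact ⟨l, hsub.trans (List.sublist_cons_self x s), hpair, hall, hlen⟩

/-- L9: any strictly decreasing sublist is at most as long as the column. -/
lemma dec_sublist_le : ∀ (n : ℕ) (w : List A), w.length ≤ n → ∀ l : List A,
    l.Sublist w → l.Pairwise (fun x y => y < x) → l.length ≤ (colAct w ∅).card := by
  intro n
  induction n with
  | zero =>
      intro w hw l hsub _
      have : w = [] := List.length_eq_zero_iff.1 (Nat.le_zero.1 hw)
      subst this
      simp [List.sublist_nil.1 hsub]
  | succ n ih =>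
      intro w hw l hsub hpair
      match w with
      | [] => simp [List.sublist_nil.1 hsub]
      | x :: s =>
          have hcons : colAct (x :: s) ∅ = colInsert x (colAct s ∅) := rfl
          rw [hcons]
          have hslen : s.length ≤ n := by simpa using hw
          cases hsub with
          | cons _ h =>
              exact (ih s hslen l h hpair).trans (card_le_card_colInsert x _)
          | cons_cons _ h =>
              rename_i t
              have hxall : ∀ e ∈ t, e < x := (List.pairwise_cons.1 hpair).1
              have htq : t.Sublist (s.filter (fun z => decide (z < x))) := by
                have h1 : t.filter (fun z => decide (z < x)) = t :=
                  List.filter_eq_self.2 (fun e he => decide_eq_true (hxall e he))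
                have := List.Sublist.filter (fun z => decide (z < x)) h
                rwa [h1] at this
              have hq := ih (s.filter (fun z => decide (z < x)))
                ((List.length_filter_le _ _).trans hslen) t htq
                (List.pairwise_cons.1 hpair).2
              have hcol : colAct (s.filter (fun z => decide (z < x))) ∅
                  = (colAct s ∅).filter (fun a => decide (a < x)) := by
                rw [colAct_filter _ (isLower_lt x) s ∅, Finset.filter_empty]
              rw [hcol] at hq
              rw [List.length_cons, card_colInsert]
              set μ := colAct s ∅ with hμ
              by_cases hne : (μ.filter (fun y => x ≤ y)).Nonempty
              · rw [if_pos hne]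
                have hy := Finset.mem_filter.1 (Finset.min'_mem _ hne)
                have hlt : (μ.filter (fun a => decide (a < x))).card < μ.card := by
                  apply Finset.card_lt_card
                  rw [Finset.ssubset_iff_of_subset (Finset.filter_subset _ _)]
                  refine ⟨_, hy.1, fun hmem => ?_⟩
                  have := (Finset.mem_filter.1 hmem).2
                  rw [decide_eq_true_eq] at this
                  exact absurd hy.2 (not_le.2 this)
                omega
              · rw [if_neg hne]
                have : (μ.filter (fun a => decide (a < x))).card ≤ μ.card :=
                  Finset.card_filter_le _ _
                omega

lemma maxDecLen_eq_card (w : List A) : maxDecLen w = (colAct w ∅).card := by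
  apply le_antisymm
  · obtain ⟨l, hsub, hpair, hlen⟩ := exists_maxDecLen w
    rw [← hlen]
    exact dec_sublist_le w.length w le_rfl l hsub hpair
  · obtain ⟨l, hsub, hpair, _, hlen⟩ := exists_dec_sublist w (fun _ => true)
      (fun _ _ _ _ => rfl)
    have heq : (colAct w ∅).filter (fun _ => (true : Bool)) = colAct w ∅ := by
      simp
    rw [← heq, ← hlen]
    exact length_le_maxDecLen hsub hpair

end Styl

namespace Styl
variable {A : Type*} [LinearOrder A]

lemma filter_idem' (p : A → Bool) (T : Finset A) :
    (T.filter (fun z => p z)).filter (fun z => p z) = T.filter (fun z => p z) := by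
  ext z
  simp only [Finset.mem_filter]
  tauto

lemma card_filter_le_eq (a : A) (T : Finset A) :
    (T.filter (fun z => decide (z ≤ a))).card =
      (T.filter (fun z => decide (z < a))).card + (if a ∈ T then 1 else 0) := by
  have hsplit : T.filter (fun z => decide (z ≤ a)) =
      if a ∈ T then insert a (T.filter (fun z => decide (z < a)))
      else T.filter (fun z => decide (z < a)) := by
    ext z
    by_cases ha : a ∈ T
    · rw [if_pos ha]
      simp only [Finset.mem_filter, Finset.mem_insert, decide_eq_true_eq]
      constructor
      · rintro ⟨hz, hza⟩
        rcases eq_or_lt_of_le hza with rfl | hlt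
        · exact Or.inl rfl
        · exact Or.inr ⟨hz, hlt⟩
      · rintro (rfl | ⟨hz, hlt⟩)
        · exact ⟨ha, le_refl _⟩
        · exact ⟨hz, hlt.le⟩
    · rw [if_neg ha]
      simp only [Finset.mem_filter, decide_eq_true_eq]
      constructor
      · rintro ⟨hz, hza⟩
        refine ⟨hz, lt_of_le_of_ne hza ?_⟩
        rintro rfl
        exact ha hz
      · rintro ⟨hz, hlt⟩
        exact ⟨hz, hlt.le⟩
  rw [hsplit]
  by_cases ha : a ∈ T
  · rw [if_pos ha, if_pos ha, Finset.card_insert_of_notMem]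
    intro hmem
    have := (Finset.mem_filter.1 hmem).2
    rw [decide_eq_true_eq] at this
    exact absurd this (lt_irrefl a)
  · rw [if_neg ha, if_neg ha]; omega

theorem styl_syntactic' {A : Type*} [LinearOrder A] [Fintype A] (u v : List A) :
    StylEq u v ↔
      ∀ x y : List A, maxDecLen (x ++ u ++ y) = maxDecLen (x ++ v ++ y) := by
  constructor
  · intro h x y
    rw [maxDecLen_eq_card, maxDecLen_eq_card, colAct_append, colAct_append,
      colAct_append, colAct_append, h (colAct y ∅)]
  · intro h
    have key : ∀ (p : A → Bool), IsLower p → ∀ γ : Finset A,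
        ((colAct u γ).filter (fun z => p z)).card
          = ((colAct v γ).filter (fun z => p z)).card := by
      intro p hp γ
      set γ' := γ.filter (fun z => p z) with hγ'
      have hcardeq : ∀ w : List A,
          maxDecLen (descList (Finset.univ.filter (fun z => !(p z))) ++ w ++ descList γ')
            = (Finset.univ.filter (fun z => !(p z))).card
              + ((colAct w γ').filter (fun z => p z)).card := by
        intro w
        rw [maxDecLen_eq_card, colAct_append, colAct_append, colAct_descList_empty,
          card_colAct_desc_compl p hp]
      have h2 := h (descList (Finset.univ.filter (fun z => !(p z)))) (descList γ')
      rw [hcardeq u, hcardeq v] at h2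
      have h3 : ((colAct u γ').filter (fun z => p z)).card
          = ((colAct v γ').filter (fun z => p z)).card := by omega
      have h4 : ∀ w : List A, (colAct w γ).filter (fun z => p z)
          = (colAct w γ').filter (fun z => p z) := by
        intro w
        rw [colAct_filter p hp w γ, colAct_filter p hp w γ', ← hγ', filter_idem' p γ]
      rw [h4 u, h4 v]
      exact h3
    intro γ
    ext a
    have hle := key (fun z => decide (z ≤ a)) (isLower_le a) γ
    have hlt := key (fun z => decide (z < a)) (isLower_lt a) γ
    rw [card_filter_le_eq a (colAct u γ), card_filter_le_eq a (colAct v γ), hlt] at hle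
    by_cases hu : a ∈ colAct u γ <;> by_cases hv : a ∈ colAct v γ <;>
      simp [hu, hv] at hle ⊢
end Styl

/-- The stylic monoid is the syntactic monoid of the longest strictly decreasing
subsequence function: `u ≡_styl v` iff `f(xuy) = f(xvy)` for all words `x, y`. -/
theorem styl_syntactic {A : Type*} [LinearOrder A] [Fintype A] (u v : List A) :
    StylEq u v ↔
      ∀ x y : List A, maxDecLen (x ++ u ++ y) = maxDecLen (x ++ v ++ y) :=
  Styl.styl_syntactic' u v
end
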